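/- arXiv:2104.09192 — 4 statements merged into one kernel-verified Lean document; each statement's English description precedes it below -/
import Mathlib

section
/- Let E be a finite set with |E| = n, let α, β ∈ [0,1] with α + β > 1, let 0 < c < 1, and let A, B be independent uniform random subsets of E of cardinalities ⌊n^α⌋ and ⌊n^β⌋. If n ≥ (4/c)^{1/(α+β-1)}, then Pr(||A ∩ B| - n^{α+β-1}| > c·n^{α+β-1}) ≤ 12/(c²·n^{α+β-1}). -/
open MeasureTheory ProbabilityTheory Filter Finset
open scoped ENNReal Topology

section AuxLemmas

lemma count_supersets {E : Type*} [Fintype E] [DecidableEq E] (s : Finset E) (k : ℕ)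
    (hk : s.card ≤ k) :
    ((Finset.univ.powersetCard k : Finset (Finset E)).filter (fun a => s ⊆ a)).card
      = (Fintype.card E - s.card).choose (k - s.card) := by
  have : ((Finset.univ.powersetCard k : Finset (Finset E)).filter (fun a => s ⊆ a)).card
      = (sᶜ.powersetCard (k - s.card)).card := by
    apply Finset.card_bij (fun a _ => a \ s)
    · intro a ha
      simp only [mem_filter, mem_powersetCard] at ha
      simp only [mem_powersetCard]
      refine ⟨fun x hx => ?_, ?_⟩
      · exact Finset.mem_compl.2 (Finset.mem_sdiff.1 hx).2
      · rw [card_sdiff_of_subset ha.2, ha.1.2]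
    · intro a ha b hb h
      simp only [mem_filter, mem_powersetCard] at ha hb
      have := congrArg (· ∪ s) h
      simpa [sdiff_union_of_subset ha.2, sdiff_union_of_subset hb.2] using this
    · intro b hb
      simp only [mem_powersetCard] at hb
      have hds : Disjoint b s := by
        rw [Finset.disjoint_right]; intro x hx hxb
        exact (Finset.mem_compl.1 (hb.1 hxb)) hx
      refine ⟨b ∪ s, ?_, ?_⟩
      · simp only [mem_filter, mem_powersetCard]
        refine ⟨⟨subset_univ _, ?_⟩, subset_union_right⟩
        rw [card_union_of_disjoint hds, hb.2]
        omega
      · rw [union_sdiff_right, sdiff_eq_self_of_disjoint hds]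
  rw [this, card_powersetCard, card_compl]

lemma cheby_sum {ι : Type*} [Fintype ι] (w X : ι → ℝ) (hw : ∀ i, 0 ≤ w i)
    (m t : ℝ) (ht : 0 < t) :
    ∑ i ∈ Finset.univ.filter (fun i => t ≤ |X i - m|), w i
      ≤ (∑ i, w i * (X i - m)^2) / t^2 := by
  rw [le_div_iff₀ (by positivity)]
  calc (∑ i ∈ Finset.univ.filter (fun i => t ≤ |X i - m|), w i) * t^2
      = ∑ i ∈ Finset.univ.filter (fun i => t ≤ |X i - m|), w i * t^2 := by
        rw [Finset.sum_mul]
    _ ≤ ∑ i ∈ Finset.univ.filter (fun i => t ≤ |X i - m|), w i * (X i - m)^2 := by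
        apply Finset.sum_le_sum
        intro i hi
        simp only [mem_filter] at hi
        have : t^2 ≤ (X i - m)^2 := by
          have := sq_abs (X i - m)
          nlinarith [hi.2, abs_nonneg (X i - m)]
        exact mul_le_mul_of_nonneg_left this (hw i)
    _ ≤ ∑ i, w i * (X i - m)^2 := by
        apply Finset.sum_le_sum_of_subset_of_nonneg (filter_subset _ _)
        intro i _ _
        have := hw i
        positivity

lemma chooseRatio (n k : ℕ) (h1 : 1 ≤ k) (h2 : k ≤ n) :
    n * (n-1).choose (k-1) = n.choose k * k := by
  obtain ⟨k', rfl⟩ : ∃ k', k = k'+1 := ⟨k-1, by omega⟩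
  obtain ⟨n', rfl⟩ : ∃ n', n = n'+1 := ⟨n-1, by omega⟩
  simpa using Nat.add_one_mul_choose_eq n' k'

lemma sum_inter_card {E : Type*} [Fintype E] [DecidableEq E] (k : ℕ) (hk : 1 ≤ k) (b : Finset E) :
    ∑ a ∈ Finset.univ.powersetCard k, (a ∩ b).card
      = b.card * (Fintype.card E - 1).choose (k-1) := by
  have hcard : ∀ a : Finset E, (a ∩ b).card = ∑ e ∈ b, if e ∈ a then 1 else 0 := by
    intro a
    rw [inter_comm, ← filter_mem_eq_inter, card_filter]
  simp_rw [hcard]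
  rw [Finset.sum_comm]
  have inner : ∀ e : E, (∑ a ∈ Finset.univ.powersetCard k, if e ∈ a then 1 else 0)
      = (Fintype.card E - 1).choose (k-1) := by
    intro e
    rw [sum_boole]
    have : {a ∈ (Finset.univ : Finset E).powersetCard k | e ∈ a}
        = (Finset.univ.powersetCard k).filter (fun a => ({e} : Finset E) ⊆ a) := by
      apply filter_congr; intro a _; simp
    rw [this, count_supersets ({e} : Finset E) k (by simpa using hk)]
    simp
  simp_rw [inner, sum_const, smul_eq_mul]

lemma sum_inter_card_sq {E : Type*} [Fintype E] [DecidableEq E] (k : ℕ) (hk : 2 ≤ k)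
    (b : Finset E) :
    ∑ a ∈ Finset.univ.powersetCard k, ((a ∩ b).card)^2
      = b.card * (Fintype.card E - 1).choose (k-1)
        + (b.card * (b.card - 1)) * ((Fintype.card E - 2).choose (k-2)) := by
  have hcard : ∀ a : Finset E, (a ∩ b).card = ∑ e ∈ b, if e ∈ a then 1 else 0 := by
    intro a
    rw [inter_comm, ← filter_mem_eq_inter, card_filter]
  have hsq : ∀ a : Finset E, ((a ∩ b).card)^2
      = ∑ e ∈ b, ∑ f ∈ b, if e ∈ a ∧ f ∈ a then 1 else 0 := by
    intro a
    rw [sq, hcard, Finset.sum_mul_sum]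
    refine Finset.sum_congr rfl fun e _ => Finset.sum_congr rfl fun f _ => ?_
    split_ifs <;> simp_all
  simp_rw [hsq]
  rw [Finset.sum_comm]
  have inner : ∀ e ∈ b, (∑ a ∈ Finset.univ.powersetCard k, ∑ f ∈ b,
        if e ∈ a ∧ f ∈ a then 1 else 0)
      = ∑ f ∈ b, if e = f then (Fintype.card E - 1).choose (k-1)
          else (Fintype.card E - 2).choose (k-2) := by
    intro e _
    rw [Finset.sum_comm]
    refine Finset.sum_congr rfl fun f _ => ?_
    rw [sum_boole]
    by_cases hef : e = f
    · subst hef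
      have : {a ∈ (Finset.univ : Finset E).powersetCard k | e ∈ a ∧ e ∈ a}
          = (Finset.univ.powersetCard k).filter (fun a => ({e} : Finset E) ⊆ a) := by
        apply filter_congr; intro a _; simp
      rw [this, count_supersets ({e} : Finset E) k (by simp; omega)]
      simp
    · have : {a ∈ (Finset.univ : Finset E).powersetCard k | e ∈ a ∧ f ∈ a}
          = (Finset.univ.powersetCard k).filter (fun a => ({e, f} : Finset E) ⊆ a) := by
        apply filter_congr; intro a _; simp [insert_subset_iff]
      rw [this, count_supersets ({e, f} : Finset E) k
        (by rw [card_insert_of_notMem (by simpa using hef), card_singleton]; omega)]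
      rw [card_insert_of_notMem (by simpa using hef), card_singleton]
      simp [hef]
  rw [Finset.sum_congr rfl inner]
  have inner2 : ∀ e ∈ b, (∑ f ∈ b, if e = f then (Fintype.card E - 1).choose (k-1)
          else (Fintype.card E - 2).choose (k-2))
      = (Fintype.card E - 1).choose (k-1) + (b.card - 1) * (Fintype.card E - 2).choose (k-2) := by
    intro e he
    rw [← Finset.add_sum_erase _ _ he]
    congr 1
    · simp
    · rw [Finset.sum_congr rfl (fun f hf => ?_), sum_const, card_erase_of_mem he, smul_eq_mul]
      rw [if_neg]
      exact fun h => (Finset.mem_erase.1 hf).1 h.symm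
  rw [Finset.sum_congr rfl inner2, Finset.sum_add_distrib, sum_const, sum_const, smul_eq_mul,
    smul_eq_mul]
  ring

lemma castmulsub (x : ℕ) : ((x * (x-1) : ℕ) : ℝ) = (x:ℝ) * ((x:ℝ)-1) := by
  cases x with
  | zero => simp
  | succ y => push_cast [Nat.succ_sub_one]; ring

end AuxLemmas

/-- `A` is a uniform random subset of cardinality `k`. -/
def IsUniformRS {E Ω : Type*} [Fintype E] [DecidableEq E] [MeasurableSpace Ω]
    (μ : Measure Ω) (A : Ω → Finset E) (k : ℕ) : Prop :=
  ∀ a : Finset E,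
    μ {ω | A ω = a}
      = if a.card = k then ((Fintype.card E).choose k : ℝ≥0∞)⁻¹ else 0

/-- Two random subsets are independent if their joint law factorizes. -/
def IndepRS {E Ω : Type*} [MeasurableSpace Ω] (μ : Measure Ω)
    (A B : Ω → Finset E) : Prop :=
  ∀ a b : Finset E,
    μ ({ω | A ω = a} ∩ {ω | B ω = b}) = μ {ω | A ω = a} * μ {ω | B ω = b}

set_option maxHeartbeats 1000000 in
theorem stmt_10 {E Ω : Type*} [Fintype E] [DecidableEq E]
    [MeasurableSpace Ω] (μ : Measure Ω) [IsProbabilityMeasure μ]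
    (n : ℕ) (hn : Fintype.card E = n)
    (α β : ℝ) (hα0 : 0 ≤ α) (hα1 : α ≤ 1) (hβ0 : 0 ≤ β) (hβ1 : β ≤ 1)
    (hαβ : 1 < α + β)
    (c : ℝ) (hc0 : 0 < c) (hc1 : c < 1)
    (hnc : (4 / c) ^ (1 / (α + β - 1)) ≤ (n : ℝ))
    (A B : Ω → Finset E)
    (hAmeas : ∀ a : Finset E, MeasurableSet {ω | A ω = a})
    (hBmeas : ∀ b : Finset E, MeasurableSet {ω | B ω = b})
    (hA : IsUniformRS μ A ⌊(n : ℝ) ^ α⌋₊)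
    (hB : IsUniformRS μ B ⌊(n : ℝ) ^ β⌋₊)
    (hAB : IndepRS μ A B) :
    μ {ω | |((A ω ∩ B ω).card : ℝ) - (n : ℝ) ^ (α + β - 1)|
          > c * (n : ℝ) ^ (α + β - 1)}
      ≤ ENNReal.ofReal (12 / (c ^ 2 * (n : ℝ) ^ (α + β - 1))) := by
  classical
  set ka := ⌊(n : ℝ) ^ α⌋₊ with hka_def
  set kb := ⌊(n : ℝ) ^ β⌋₊ with hkb_def
  set m := (n : ℝ) ^ (α + β - 1) with hm_def
  -- basic numeric facts
  have hγ0 : (0:ℝ) < α + β - 1 := by linarith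
  have hγ1 : α + β - 1 ≤ 1 := by linarith
  have h4c : (4:ℝ) ≤ 4 / c := by rw [le_div_iff₀ hc0]; linarith
  have h4c1 : (1:ℝ) < 4 / c := by linarith
  have hn1 : (1:ℝ) < (n:ℝ) := by
    refine lt_of_lt_of_le ?_ hnc
    exact (Real.one_lt_rpow_iff_of_pos (by linarith)).2 (Or.inl ⟨h4c1, by positivity⟩)
  have hn0 : (0:ℝ) < n := by linarith
  have hm4c : 4 / c ≤ m := by
    have h1 : ((4/c) ^ (1/(α+β-1))) ^ (α+β-1) ≤ (n:ℝ) ^ (α+β-1) :=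
      Real.rpow_le_rpow (by positivity) hnc (le_of_lt hγ0)
    rwa [← Real.rpow_mul (by positivity), one_div_mul_cancel (ne_of_gt hγ0),
      Real.rpow_one] at h1
  have hm4 : (4:ℝ) ≤ m := le_trans h4c hm4c
  have hm0 : (0:ℝ) < m := by linarith
  have hmn : m ≤ n := by
    calc m ≤ (n:ℝ) ^ (1:ℝ) := Real.rpow_le_rpow_of_exponent_le hn1.le hγ1
    _ = n := Real.rpow_one _
  have hn2 : (2:ℝ) ≤ (n:ℝ) := by linarith
  have hma : m ≤ (n:ℝ)^α := Real.rpow_le_rpow_of_exponent_le hn1.le (by linarith)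
  have hmb : m ≤ (n:ℝ)^β := Real.rpow_le_rpow_of_exponent_le hn1.le (by linarith)
  have hNa : (n:ℝ)^α ≤ (n:ℝ) := by
    calc (n:ℝ)^α ≤ (n:ℝ) ^ (1:ℝ) := Real.rpow_le_rpow_of_exponent_le hn1.le hα1
    _ = n := Real.rpow_one _
  have hNb : (n:ℝ)^β ≤ (n:ℝ) := by
    calc (n:ℝ)^β ≤ (n:ℝ) ^ (1:ℝ) := Real.rpow_le_rpow_of_exponent_le hn1.le hβ1
    _ = n := Real.rpow_one _
  have hkaR : (ka:ℝ) ≤ (n:ℝ)^α := Nat.floor_le (by positivity)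
  have hkbR : (kb:ℝ) ≤ (n:ℝ)^β := Nat.floor_le (by positivity)
  have hkaR' : (n:ℝ)^α - 1 ≤ ka := by
    have := Nat.lt_floor_add_one ((n:ℝ)^α); linarith
  have hkbR' : (n:ℝ)^β - 1 ≤ kb := by
    have := Nat.lt_floor_add_one ((n:ℝ)^β); linarith
  have hka4 : 4 ≤ ka := Nat.le_floor (by exact_mod_cast le_trans hm4 hma)
  have hkb4 : 4 ≤ kb := Nat.le_floor (by exact_mod_cast le_trans hm4 hmb)
  have hkan : ka ≤ n := by
    have := Nat.floor_mono hNa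
    rwa [Nat.floor_natCast] at this
  have hkbn : kb ≤ n := by
    have := Nat.floor_mono hNb
    rwa [Nat.floor_natCast] at this
  have hnn2 : 2 ≤ n := by exact_mod_cast hn2
  -- probabilities
  set C := n.choose ka with hC_def
  set D := n.choose kb with hD_def
  have hC0 : 0 < C := Nat.choose_pos hkan
  have hD0 : 0 < D := Nat.choose_pos hkbn
  have hC0R : (0:ℝ) < C := by exact_mod_cast hC0
  have hD0R : (0:ℝ) < D := by exact_mod_cast hD0
  set P : Finset E → ℝ := fun a => (μ {ω | A ω = a}).toReal with hP_def
  set Q : Finset E → ℝ := fun b => (μ {ω | B ω = b}).toReal with hQ_def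
  have hAval : ∀ a, μ {ω | A ω = a} = if a.card = ka then ((C : ℝ≥0∞))⁻¹ else 0 := by
    intro a; rw [hA a, hn]
  have hBval : ∀ b, μ {ω | B ω = b} = if b.card = kb then ((D : ℝ≥0∞))⁻¹ else 0 := by
    intro b; rw [hB b, hn]
  have hPval : ∀ a, P a = if a.card = ka then ((C:ℝ))⁻¹ else 0 := by
    intro a
    rw [hP_def]
    simp only [hAval a]
    split
    · rw [ENNReal.toReal_inv]; simp
    · simp
  have hQval : ∀ b, Q b = if b.card = kb then ((D:ℝ))⁻¹ else 0 := by
    intro b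
    rw [hQ_def]
    simp only [hBval b]
    split
    · rw [ENNReal.toReal_inv]; simp
    · simp
  have hPpos : ∀ a, 0 ≤ P a := fun a => ENNReal.toReal_nonneg
  have hQpos : ∀ b, 0 ≤ Q b := fun b => ENNReal.toReal_nonneg
  have hfilt : ∀ k : ℕ, (Finset.univ : Finset (Finset E)).filter (fun a => a.card = k)
      = (Finset.univ : Finset E).powersetCard k := by
    intro k; ext a; simp [Finset.mem_powersetCard, Finset.subset_univ]
  have hcardS : ∀ k : ℕ, ((Finset.univ : Finset E).powersetCard k).card = n.choose k := by
    intro k; rw [Finset.card_powersetCard, Finset.card_univ, hn]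
  have hsumP : ∀ x : Finset E → ℝ, ∑ a, P a * x a
      = (C:ℝ)⁻¹ * ∑ a ∈ (Finset.univ : Finset E).powersetCard ka, x a := by
    intro x
    rw [Finset.mul_sum, ← hfilt ka, Finset.sum_filter]
    apply Finset.sum_congr rfl
    intro a _
    rw [hPval a]
    split <;> simp
  have hsumQ : ∀ x : Finset E → ℝ, ∑ b, Q b * x b
      = (D:ℝ)⁻¹ * ∑ b ∈ (Finset.univ : Finset E).powersetCard kb, x b := by
    intro x
    rw [Finset.mul_sum, ← hfilt kb, Finset.sum_filter]
    apply Finset.sum_congr rfl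
    intro b _
    rw [hQval b]
    split <;> simp
  have hsum1P : ∑ a, P a = 1 := by
    have h := hsumP (fun _ => 1)
    simp only [mul_one] at h
    rw [h, Finset.sum_const, hcardS, nsmul_eq_mul, mul_one, ← hC_def]
    field_simp
  have hsum1Q : ∑ b, Q b = 1 := by
    have h := hsumQ (fun _ => 1)
    simp only [mul_one] at h
    rw [h, Finset.sum_const, hcardS, nsmul_eq_mul, mul_one, ← hD_def]
    field_simp
  -- choose ratio real identities
  have hch1a : ((n-1).choose (ka-1) : ℝ) = (C:ℝ) * ka / n := by
    rw [eq_div_iff (ne_of_gt hn0)]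
    have := chooseRatio n ka (by omega) hkan
    have hcast : (n:ℝ) * ((n-1).choose (ka-1) : ℝ) = (C:ℝ) * ka := by exact_mod_cast this
    linarith [hcast]
  have hch1b : ((n-1).choose (kb-1) : ℝ) = (D:ℝ) * kb / n := by
    rw [eq_div_iff (ne_of_gt hn0)]
    have := chooseRatio n kb (by omega) hkbn
    have hcast : (n:ℝ) * ((n-1).choose (kb-1) : ℝ) = (D:ℝ) * kb := by exact_mod_cast this
    linarith [hcast]
  have hn1R : (0:ℝ) < (n:ℝ) - 1 := by linarith
  have hch2a : ((n-2).choose (ka-2) : ℝ) = (C:ℝ) * ka * ((ka:ℝ)-1) / ((n:ℝ) * ((n:ℝ)-1)) := by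
    have hnat : n * ((n-1) * ((n-2).choose (ka-2))) = C * ka * (ka - 1) := by
      have h2 := chooseRatio (n-1) (ka-1) (by omega) (by omega)
      rw [show n-1-1 = n-2 by omega, show ka-1-1 = ka-2 by omega] at h2
      calc n * ((n-1) * ((n-2).choose (ka-2))) = n * ((n-1).choose (ka-1) * (ka-1)) := by
            rw [h2]
        _ = (n * (n-1).choose (ka-1)) * (ka-1) := by ring
        _ = C * ka * (ka-1) := by rw [chooseRatio n ka (by omega) hkan]
    rw [eq_div_iff (by positivity)]
    have hcast : ((n:ℕ):ℝ) * ((((n-1 : ℕ)):ℝ) * ((n-2).choose (ka-2) : ℝ))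
        = (C:ℝ) * ka * (((ka - 1 : ℕ)):ℝ) := by exact_mod_cast hnat
    rw [Nat.cast_sub (by omega), Nat.cast_sub (by omega)] at hcast
    push_cast at hcast ⊢
    linarith [hcast]
  have hch2b : ((n-2).choose (kb-2) : ℝ) = (D:ℝ) * kb * ((kb:ℝ)-1) / ((n:ℝ) * ((n:ℝ)-1)) := by
    have hnat : n * ((n-1) * ((n-2).choose (kb-2))) = D * kb * (kb - 1) := by
      have h2 := chooseRatio (n-1) (kb-1) (by omega) (by omega)
      rw [show n-1-1 = n-2 by omega, show kb-1-1 = kb-2 by omega] at h2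
      calc n * ((n-1) * ((n-2).choose (kb-2))) = n * ((n-1).choose (kb-1) * (kb-1)) := by
            rw [h2]
        _ = (n * (n-1).choose (kb-1)) * (kb-1) := by ring
        _ = D * kb * (kb-1) := by rw [chooseRatio n kb (by omega) hkbn]
    rw [eq_div_iff (by positivity)]
    have hcast : ((n:ℕ):ℝ) * ((((n-1 : ℕ)):ℝ) * ((n-2).choose (kb-2) : ℝ))
        = (D:ℝ) * kb * (((kb - 1 : ℕ)):ℝ) := by exact_mod_cast hnat
    rw [Nat.cast_sub (by omega), Nat.cast_sub (by omega)] at hcast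
    push_cast at hcast ⊢
    linarith [hcast]
  -- per-set moments
  have momQ1 : ∀ a : Finset E, ∑ b, Q b * ((a ∩ b).card : ℝ) = (kb:ℝ)/n * a.card := by
    intro a
    rw [hsumQ]
    have hswap : ∀ b : Finset E, a ∩ b = b ∩ a := fun b => inter_comm a b
    simp_rw [hswap]
    rw [show (∑ b ∈ (Finset.univ : Finset E).powersetCard kb, ((b ∩ a).card:ℝ))
        = ((∑ b ∈ (Finset.univ : Finset E).powersetCard kb, (b ∩ a).card : ℕ) : ℝ) by
      push_cast; rfl]
    rw [sum_inter_card kb (by omega) a, hn]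
    push_cast
    rw [hch1b]
    field_simp
  have momQ2 : ∀ a : Finset E, ∑ b, Q b * ((a ∩ b).card : ℝ)^2
      = (kb:ℝ)/n * a.card
        + (kb:ℝ)*((kb:ℝ)-1)/((n:ℝ)*((n:ℝ)-1)) * ((a.card:ℝ) * ((a.card:ℝ)-1)) := by
    intro a
    rcases Nat.eq_zero_or_pos a.card with ha0 | ha1
    · rw [Finset.card_eq_zero] at ha0; subst ha0
      simp
    rw [hsumQ]
    have hswap : ∀ b : Finset E, a ∩ b = b ∩ a := fun b => inter_comm a b
    simp_rw [hswap]
    rw [show (∑ b ∈ (Finset.univ : Finset E).powersetCard kb, ((b ∩ a).card:ℝ)^2)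
        = ((∑ b ∈ (Finset.univ : Finset E).powersetCard kb, ((b ∩ a).card)^2 : ℕ) : ℝ) by
      push_cast; rfl]
    rw [sum_inter_card_sq kb (by omega) a, hn]
    push_cast [Nat.cast_sub ha1]
    rw [hch1b, hch2b]
    field_simp
  -- support constants
  have hPcard : ∑ a, P a * (a.card : ℝ) = ka := by
    rw [hsumP]
    have : ∀ a ∈ (Finset.univ : Finset E).powersetCard ka, ((a.card : ℝ)) = (ka:ℝ) := by
      intro a ha
      rw [Finset.mem_powersetCard] at ha
      rw [ha.2]
    rw [Finset.sum_congr rfl this, Finset.sum_const, hcardS, nsmul_eq_mul, ← hC_def]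
    field_simp
  have hPcard2 : ∑ a, P a * ((a.card : ℝ) * ((a.card:ℝ) - 1)) = (ka:ℝ) * ((ka:ℝ)-1) := by
    rw [hsumP]
    have : ∀ a ∈ (Finset.univ : Finset E).powersetCard ka,
        ((a.card : ℝ) * ((a.card:ℝ)-1)) = (ka:ℝ) * ((ka:ℝ)-1) := by
      intro a ha
      rw [Finset.mem_powersetCard] at ha
      rw [ha.2]
    rw [Finset.sum_congr rfl this, Finset.sum_const, hcardS, nsmul_eq_mul, ← hC_def]
    field_simp
  -- total moments
  set w : Finset E × Finset E → ℝ := fun p => P p.1 * Q p.2 with hw_def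
  set X : Finset E × Finset E → ℝ := fun p => ((p.1 ∩ p.2).card : ℝ) with hX_def
  have hw0 : ∀ p, 0 ≤ w p := fun p => mul_nonneg (hPpos _) (hQpos _)
  have hwsum : ∑ p, w p = 1 := by
    have h : ∑ p : Finset E × Finset E, w p = ∑ a, ∑ b, P a * Q b :=
      Fintype.sum_prod_type _
    rw [h]
    simp_rw [← Finset.mul_sum, hsum1Q, mul_one, hsum1P]
  set S1 : ℝ := (ka:ℝ) * kb / n with hS1_def
  set S2 : ℝ := (kb:ℝ)/n * ka
      + (kb:ℝ)*((kb:ℝ)-1)/((n:ℝ)*((n:ℝ)-1)) * ((ka:ℝ) * ((ka:ℝ)-1)) with hS2_def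
  have hS1 : ∑ p, w p * X p = S1 := by
    calc ∑ p, w p * X p = ∑ a, ∑ b, (P a * Q b) * ((a ∩ b).card : ℝ) :=
          Fintype.sum_prod_type _
    _ = ∑ a, P a * (∑ b, Q b * ((a ∩ b).card:ℝ)) := by
        refine Finset.sum_congr rfl fun a _ => ?_
        rw [Finset.mul_sum]
        exact Finset.sum_congr rfl fun b _ => by ring
    _ = ∑ a, P a * ((kb:ℝ)/n * a.card) := by
        exact Finset.sum_congr rfl fun a _ => by rw [momQ1 a]
    _ = (kb:ℝ)/n * ∑ a, P a * (a.card:ℝ) := by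
        rw [Finset.mul_sum]
        exact Finset.sum_congr rfl fun a _ => by ring
    _ = S1 := by rw [hPcard, hS1_def]; ring
  have hS2 : ∑ p, w p * (X p)^2 = S2 := by
    calc ∑ p, w p * (X p)^2 = ∑ a, ∑ b, (P a * Q b) * ((a ∩ b).card : ℝ)^2 :=
          Fintype.sum_prod_type _
    _ = ∑ a, P a * (∑ b, Q b * ((a ∩ b).card:ℝ)^2) := by
        refine Finset.sum_congr rfl fun a _ => ?_
        rw [Finset.mul_sum]
        exact Finset.sum_congr rfl fun b _ => by ring
    _ = ∑ a, P a * ((kb:ℝ)/n * a.card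
          + (kb:ℝ)*((kb:ℝ)-1)/((n:ℝ)*((n:ℝ)-1)) * ((a.card:ℝ) * ((a.card:ℝ)-1))) := by
        exact Finset.sum_congr rfl fun a _ => by rw [momQ2 a]
    _ = (kb:ℝ)/n * (∑ a, P a * (a.card:ℝ))
          + (kb:ℝ)*((kb:ℝ)-1)/((n:ℝ)*((n:ℝ)-1))
            * (∑ a, P a * ((a.card:ℝ) * ((a.card:ℝ)-1))) := by
        rw [Finset.mul_sum, Finset.mul_sum, ← Finset.sum_add_distrib]
        exact Finset.sum_congr rfl fun a _ => by ring
    _ = S2 := by rw [hPcard, hPcard2, hS2_def]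
  have hVar : ∑ p, w p * (X p - S1)^2 = S2 - S1^2 := by
    have expand : ∀ p, w p * (X p - S1)^2
        = w p * (X p)^2 - 2*S1*(w p * X p) + S1^2 * w p := fun p => by ring
    rw [Finset.sum_congr rfl (fun p _ => expand p), Finset.sum_add_distrib,
      Finset.sum_sub_distrib, ← Finset.mul_sum, ← Finset.mul_sum, hS1, hS2, hwsum]
    ring
  -- bounds
  have hxyNm : (ka:ℝ) * kb ≤ (n:ℝ) * m := by
    have h1 : (ka:ℝ) * kb ≤ (n:ℝ)^α * (n:ℝ)^β := by
      apply mul_le_mul hkaR hkbR (by positivity) (by positivity)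
    have h2 : (n:ℝ)^α * (n:ℝ)^β = (n:ℝ) * m := by
      have hmm : (n:ℝ) * m = (n:ℝ)^(1:ℝ) * (n:ℝ)^(α+β-1) := by rw [Real.rpow_one, hm_def]
      rw [hmm, ← Real.rpow_add hn0, ← Real.rpow_add hn0]
      congr 1
      ring
    linarith
  have hS1m : S1 ≤ m := by
    rw [hS1_def, div_le_iff₀ hn0]
    linarith
  have hS1m' : m - 2 ≤ S1 := by
    rw [hS1_def, le_div_iff₀ hn0]
    have h1 : ((n:ℝ)^α - 1) * ((n:ℝ)^β - 1) ≤ (ka:ℝ) * kb := by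
      apply mul_le_mul hkaR' hkbR' (by linarith) (by positivity)
    have h2 : (n:ℝ)^α * (n:ℝ)^β = (n:ℝ) * m := by
      have hmm : (n:ℝ) * m = (n:ℝ)^(1:ℝ) * (n:ℝ)^(α+β-1) := by rw [Real.rpow_one, hm_def]
      rw [hmm, ← Real.rpow_add hn0, ← Real.rpow_add hn0]
      congr 1
      ring
    have h3 : ((n:ℝ)^α - 1) * ((n:ℝ)^β - 1)
        = (n:ℝ)*m - (n:ℝ)^α - (n:ℝ)^β + 1 := by linear_combination h2
    linarith [h1, h3, hNa, hNb]
  have hka1 : (1:ℝ) ≤ (ka:ℝ) := by exact_mod_cast Nat.one_le_iff_ne_zero.2 (by omega)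
  have hkb1 : (1:ℝ) ≤ (kb:ℝ) := by exact_mod_cast Nat.one_le_iff_ne_zero.2 (by omega)
  have hVbound : S2 - S1^2 ≤ 3*m := by
    clear_value S1 S2
    have hd : (ka:ℝ)*((ka:ℝ)-1)*((kb:ℝ)*((kb:ℝ)-1)) ≤ ((ka:ℝ)*(kb:ℝ))^2 := by
      have hh : (0:ℝ) ≤ ((ka:ℝ)*(kb:ℝ)) * ((ka:ℝ)+(kb:ℝ)-1) :=
        mul_nonneg (mul_nonneg (by linarith) (by linarith)) (by linarith)
      have expand : ((ka:ℝ)*(kb:ℝ))^2 - (ka:ℝ)*((ka:ℝ)-1)*((kb:ℝ)*((kb:ℝ)-1))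
          = ((ka:ℝ)*(kb:ℝ)) * ((ka:ℝ)+(kb:ℝ)-1) := by ring
      linarith [hh, expand]
    have hT : (ka:ℝ)*((ka:ℝ)-1)*((kb:ℝ)*((kb:ℝ)-1))/((n:ℝ)*((n:ℝ)-1))
        ≤ ((ka:ℝ)*(kb:ℝ))^2/((n:ℝ)*((n:ℝ)-1)) := by
      apply div_le_div_of_nonneg_right hd (by positivity)
    have heq : ((ka:ℝ)*(kb:ℝ))^2/((n:ℝ)*((n:ℝ)-1)) = S1^2 + S1^2/((n:ℝ)-1) := by
      rw [hS1_def]; field_simp; ring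
    have h2m : S1^2/((n:ℝ)-1) ≤ 2*m := by
      rw [div_le_iff₀ hn1R]
      have hS1pos : 0 ≤ S1 := by rw [hS1_def]; positivity
      have e1 : S1^2 ≤ m^2 := pow_le_pow_left₀ hS1pos hS1m 2
      have e2 : m*m ≤ m*((n:ℝ)) := mul_le_mul_of_nonneg_left hmn hm0.le
      have e3 : m*((n:ℝ)) ≤ m*(2*((n:ℝ)-1)) :=
        mul_le_mul_of_nonneg_left (by linarith) hm0.le
      calc S1^2 ≤ m^2 := e1
        _ = m*m := sq m
        _ ≤ m*((n:ℝ)) := e2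
        _ ≤ m*(2*((n:ℝ)-1)) := e3
        _ = 2*m*((n:ℝ)-1) := by ring
    have hS2eq : S2 = S1 + (ka:ℝ)*((ka:ℝ)-1)*((kb:ℝ)*((kb:ℝ)-1))/((n:ℝ)*((n:ℝ)-1)) := by
      rw [hS1_def, hS2_def]; ring
    have h5 : (ka:ℝ)*((ka:ℝ)-1)*((kb:ℝ)*((kb:ℝ)-1))/((n:ℝ)*((n:ℝ)-1)) ≤ S1^2 + 2*m := by
      rw [heq] at hT
      linarith [hT, h2m]
    linarith [hS1m, h5, hS2eq]
  -- Chebyshev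
  set t : ℝ := c*m/2 with ht_def
  have ht0 : 0 < t := by rw [ht_def]; positivity
  have hcm4 : 4 ≤ c*m := by
    have := (div_le_iff₀ hc0).1 hm4c
    linarith
  have hkey : ∀ p : Finset E × Finset E, c*m < |X p - m| → t ≤ |X p - S1| := by
    intro p hp
    have h1 : |X p - m| - |S1 - m| ≤ |X p - S1| := by
      have := abs_sub_abs_le_abs_sub (X p - m) (S1 - m)
      have heq : (X p - m) - (S1 - m) = X p - S1 := by ring
      rwa [heq] at this
    have h2 : |S1 - m| ≤ 2 := abs_le.2 ⟨by linarith, by linarith⟩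
    rw [ht_def]
    linarith
  have hcheb := cheby_sum w X hw0 S1 t ht0
  have main_real : ∑ p ∈ Finset.univ.filter (fun p => c*m < |X p - m|), w p
      ≤ 12/(c^2*m) := by
    calc ∑ p ∈ Finset.univ.filter (fun p => c*m < |X p - m|), w p
        ≤ ∑ p ∈ Finset.univ.filter (fun p => t ≤ |X p - S1|), w p := by
          apply Finset.sum_le_sum_of_subset_of_nonneg
          · intro p hp
            simp only [Finset.mem_filter, Finset.mem_univ, true_and] at hp ⊢
            exact hkey p hp
          · intro p _ _; exact hw0 p
      _ ≤ (∑ p, w p * (X p - S1)^2) / t^2 := hcheb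
      _ = (S2 - S1^2)/t^2 := by rw [hVar]
      _ ≤ (3*m)/t^2 := by
          apply div_le_div_of_nonneg_right hVbound (by positivity)
      _ = 12/(c^2*m) := by
          rw [ht_def]
          field_simp
          ring
  -- measure side
  set Bad : Finset (Finset E × Finset E)
    := Finset.univ.filter (fun p => c*m < |X p - m|) with hBad_def
  have hEvent : {ω | |((A ω ∩ B ω).card : ℝ) - m| > c*m}
      = ⋃ p ∈ Bad, ({ω | A ω = p.1} ∩ {ω | B ω = p.2}) := by
    ext ω
    simp only [Set.mem_setOf_eq, Set.mem_iUnion, hBad_def, Finset.mem_filter,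
      Finset.mem_univ, true_and, Set.mem_inter_iff, gt_iff_lt]
    constructor
    · intro h
      exact ⟨(A ω, B ω), h, rfl, rfl⟩
    · rintro ⟨p, hp, h1, h2⟩
      simp only [hX_def] at hp
      rw [h1, h2]
      exact hp
  rw [hEvent, measure_biUnion_finset]
  · calc ∑ p ∈ Bad, μ ({ω | A ω = p.1} ∩ {ω | B ω = p.2})
        = ∑ p ∈ Bad, ENNReal.ofReal (w p) := by
          refine Finset.sum_congr rfl fun p _ => ?_
          rw [hAB p.1 p.2, hw_def]
          rw [show μ {ω | A ω = p.1} = ENNReal.ofReal (P p.1) from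
            (ENNReal.ofReal_toReal (measure_ne_top μ _)).symm]
          rw [show μ {ω | B ω = p.2} = ENNReal.ofReal (Q p.2) from
            (ENNReal.ofReal_toReal (measure_ne_top μ _)).symm]
          rw [← ENNReal.ofReal_mul (hPpos _)]
      _ = ENNReal.ofReal (∑ p ∈ Bad, w p) :=
          (ENNReal.ofReal_sum_of_nonneg (fun p _ => hw0 p)).symm
      _ ≤ ENNReal.ofReal (12/(c^2*m)) := ENNReal.ofReal_le_ofReal main_real
  · intro p hp q hq hpq
    simp only [Function.onFun]
    rw [Set.disjoint_left]
    rintro ω ⟨h1, h2⟩ ⟨h3, h4⟩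
    simp only [Set.mem_setOf_eq] at h1 h2 h3 h4
    exact hpq (Prod.ext (h1.symm.trans h3) (h2.symm.trans h4))
  · intro p _
    exact (hAmeas p.1).inter (hBmeas p.2)
end

section
/- Let (E_n) be finite sets with |E_n| = n and let (A_n), (B_n) be densable sequences of permutation invariant random subsets of (E_n), independent for each n, with densities α and β respectively where α + β < 1. Then asymptotically almost surely A_n ∩ B_n = ∅. -/
open MeasureTheory ProbabilityTheory Filter Finset
open scoped ENNReal Topology



/-- A random subset is permutation invariant if its law is invariant under
permutations of the ambient set. -/
def PermInv {E Ω : Type*} [Fintype E] [DecidableEq E] [MeasurableSpace Ω]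
    (μ : Measure Ω) (A : Ω → Finset E) : Prop :=
  ∀ (a : Finset E) (σ : Equiv.Perm E),
    μ {ω | A ω = a} = μ {ω | A ω = a.image σ}

/-- A sequence of random subsets is densable with density `d` if asymptotically
almost surely `|E_n|^{d-ε} ≤ |A_n| ≤ |E_n|^{d+ε}`, for every `ε > 0`. -/
def Densable {E : ℕ → Type*} [∀ n, Fintype (E n)]
    {Ω : ℕ → Type*} [∀ n, MeasurableSpace (Ω n)]
    (μ : ∀ n, Measure (Ω n)) (A : ∀ n, Ω n → Finset (E n)) (d : ℝ) : Prop :=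
  ∀ ε > (0 : ℝ),
    Tendsto (fun n => μ n {ω |
        (Fintype.card (E n) : ℝ) ^ (d - ε) ≤ ((A n ω).card : ℝ)
          ∧ ((A n ω).card : ℝ) ≤ (Fintype.card (E n) : ℝ) ^ (d + ε)})
      atTop (𝓝 1)


section helpers
variable {E Ω : Type*} [Fintype E] [DecidableEq E] [MeasurableSpace Ω]
  {μ : Measure Ω} {A B : Ω → Finset E}

lemma event_eq_biUnion (A : Ω → Finset E) (P : Finset E → Prop) [DecidablePred P] :
    {ω | P (A ω)} = ⋃ a ∈ Finset.univ.filter P, {ω | A ω = a} := by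
  ext ω; simp

lemma measure_event (hA : ∀ a, MeasurableSet {ω | A ω = a}) (P : Finset E → Prop)
    [DecidablePred P] :
    μ {ω | P (A ω)} = ∑ a ∈ Finset.univ.filter P, μ {ω | A ω = a} := by
  rw [event_eq_biUnion A P, measure_biUnion_finset]
  · intro a _ b _ hab
    simp only [Function.onFun, Set.disjoint_left, Set.mem_setOf_eq]
    intro ω h1 h2; exact hab (h1.symm.trans h2)
  · exact fun a _ => hA a

lemma measurable_event (hA : ∀ a, MeasurableSet {ω | A ω = a}) (P : Finset E → Prop) :
    MeasurableSet {ω | P (A ω)} := by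
  classical
  rw [event_eq_biUnion A P]
  exact (Finset.univ.filter P).measurableSet_biUnion fun a _ => hA a

lemma measure_event_inter (hA : ∀ a, MeasurableSet {ω | A ω = a})
    (hB : ∀ b, MeasurableSet {ω | B ω = b}) (hAB : IndepRS μ A B)
    (P Q : Finset E → Prop) [DecidablePred P] [DecidablePred Q] :
    μ ({ω | P (A ω)} ∩ {ω | Q (B ω)}) = μ {ω | P (A ω)} * μ {ω | Q (B ω)} := by
  have h : {ω | P (A ω)} ∩ {ω | Q (B ω)} =
      ⋃ p ∈ (Finset.univ.filter P) ×ˢ (Finset.univ.filter Q),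
        ({ω | A ω = p.1} ∩ {ω | B ω = p.2}) := by
    ext ω
    simp only [Set.mem_inter_iff, Set.mem_setOf_eq, Set.mem_iUnion, Finset.mem_product,
      Finset.mem_filter, Finset.mem_univ, true_and]
    constructor
    · rintro ⟨hP, hQ⟩; exact ⟨(A ω, B ω), ⟨hP, hQ⟩, rfl, rfl⟩
    · rintro ⟨p, ⟨hP, hQ⟩, h1, h2⟩; rw [h1, h2]; exact ⟨hP, hQ⟩
  rw [h, measure_biUnion_finset, Finset.sum_product]
  · rw [measure_event hA P, measure_event hB Q, Finset.sum_mul_sum]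
    exact Finset.sum_congr rfl fun a _ => Finset.sum_congr rfl fun b _ => hAB a b
  · intro p hp q hq hpq
    simp only [Function.onFun, Set.disjoint_left, Set.mem_inter_iff, Set.mem_setOf_eq]
    rintro ω ⟨h1, h2⟩ ⟨h3, h4⟩
    exact hpq (Prod.ext (h1.symm.trans h3) (h2.symm.trans h4))
  · exact fun p _ => (hA p.1).inter (hB p.2)

lemma sum_swap_eq (hApi : PermInv μ A) (x y : E) (K : ℕ) :
    ∑ a ∈ Finset.univ.filter (fun a => x ∈ a ∧ a.card ≤ K), μ {ω | A ω = a} =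
    ∑ a ∈ Finset.univ.filter (fun a => y ∈ a ∧ a.card ≤ K), μ {ω | A ω = a} := by
  set σ := Equiv.swap x y with hσ
  have himg : ∀ a : Finset E, (a.image σ).image σ = a := by
    intro a
    rw [Finset.image_image]
    have : (σ : E → E) ∘ σ = id := funext fun z => Equiv.swap_apply_self x y z
    rw [this, Finset.image_id]
  refine Finset.sum_nbij' (fun a => a.image σ) (fun a => a.image σ) ?_ ?_ ?_ ?_ ?_
  · intro a ha
    simp only [Finset.mem_filter, Finset.mem_univ, true_and] at ha ⊢
    refine ⟨?_, ?_⟩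
    · have : y = σ x := (Equiv.swap_apply_left x y).symm
      rw [this]; exact Finset.mem_image_of_mem σ ha.1
    · rw [Finset.card_image_of_injective _ σ.injective]; exact ha.2
  · intro a ha
    simp only [Finset.mem_filter, Finset.mem_univ, true_and] at ha ⊢
    refine ⟨?_, ?_⟩
    · have : x = σ y := (Equiv.swap_apply_right x y).symm
      rw [this]; exact Finset.mem_image_of_mem σ ha.1
    · rw [Finset.card_image_of_injective _ σ.injective]; exact ha.2
  · exact fun a _ => himg a
  · exact fun a _ => himg a
  · exact fun a _ => hApi a σ

end helpers

set_option linter.unusedSectionVars false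

section helpers2
variable {E Ω : Type*} [Fintype E] [DecidableEq E] [MeasurableSpace Ω]
  {μ : Measure Ω} {A B : Ω → Finset E}

lemma sum_point (f : Finset E → ℝ≥0∞) (K : ℕ) :
    ∑ x : E, ∑ a ∈ Finset.univ.filter (fun a => x ∈ a ∧ a.card ≤ K), f a
      ≤ K * ∑ a : Finset E, f a := by
  classical
  have h1 : ∀ x : E, ∑ a ∈ Finset.univ.filter (fun a => x ∈ a ∧ a.card ≤ K), f a
      = ∑ a : Finset E, if x ∈ a ∧ a.card ≤ K then f a else 0 := by
    intro x; rw [Finset.sum_filter]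
  simp only [h1]
  rw [Finset.sum_comm]
  rw [Finset.mul_sum]
  refine Finset.sum_le_sum fun a _ => ?_
  by_cases hc : a.card ≤ K
  · simp only [hc, and_true]
    have : ∑ x : E, (if x ∈ a then f a else 0) = a.card • f a := by
      rw [Finset.sum_ite_mem, Finset.univ_inter, Finset.sum_const]
    rw [this, nsmul_eq_mul]
    exact mul_le_mul_left (by exact_mod_cast Nat.cast_le.mpr hc) _
  · simp [hc]

lemma point_bound [IsProbabilityMeasure μ] (hA : ∀ a, MeasurableSet {ω | A ω = a})
    (hApi : PermInv μ A) (x : E) (K : ℕ) :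
    (Fintype.card E : ℝ≥0∞) * μ {ω | x ∈ A ω ∧ (A ω).card ≤ K} ≤ K := by
  classical
  have htot : ∑ a : Finset E, μ {ω | A ω = a} = 1 := by
    have h := measure_event (μ := μ) hA (fun _ : Finset E => True)
    simpa using h.symm
  have hconst : (Fintype.card E : ℝ≥0∞) * μ {ω | x ∈ A ω ∧ (A ω).card ≤ K}
      = ∑ y : E, ∑ a ∈ Finset.univ.filter (fun a => y ∈ a ∧ a.card ≤ K), μ {ω | A ω = a} := by
    rw [measure_event hA (fun a => x ∈ a ∧ a.card ≤ K)]
    rw [Finset.sum_congr rfl fun y _ => sum_swap_eq hApi y x K, Finset.sum_const,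
      Finset.card_univ, nsmul_eq_mul]
  rw [hconst]
  calc _ ≤ (K : ℝ≥0∞) * ∑ a : Finset E, μ {ω | A ω = a} := sum_point _ K
    _ = K := by rw [htot, mul_one]

lemma core_bound [IsProbabilityMeasure μ]
    (hA : ∀ a, MeasurableSet {ω | A ω = a}) (hB : ∀ b, MeasurableSet {ω | B ω = b})
    (hApi : PermInv μ A) (hBpi : PermInv μ B) (hAB : IndepRS μ A B) (K L : ℕ) :
    (Fintype.card E : ℝ≥0∞) *
      μ {ω | (A ω ∩ B ω).Nonempty ∧ (A ω).card ≤ K ∧ (B ω).card ≤ L}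
      ≤ (K : ℝ≥0∞) * L := by
  classical
  set n := Fintype.card E with hn
  rcases Nat.eq_zero_or_pos n with h0 | hpos
  · rw [h0]; simp
  set bad := {ω | (A ω ∩ B ω).Nonempty ∧ (A ω).card ≤ K ∧ (B ω).card ≤ L} with hbad
  have hsub : bad ⊆ ⋃ x ∈ (Finset.univ : Finset E),
      ({ω | x ∈ A ω ∧ (A ω).card ≤ K} ∩ {ω | x ∈ B ω ∧ (B ω).card ≤ L}) := by
    rintro ω ⟨⟨x, hx⟩, h1, h2⟩
    have hxa := Finset.mem_inter.1 hx
    exact Set.mem_biUnion (Finset.mem_univ x) ⟨⟨hxa.1, h1⟩, hxa.2, h2⟩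
  have hle : μ bad ≤ ∑ x : E,
      μ {ω | x ∈ A ω ∧ (A ω).card ≤ K} * μ {ω | x ∈ B ω ∧ (B ω).card ≤ L} := by
    refine (measure_mono hsub).trans ((measure_biUnion_finset_le _ _).trans ?_)
    exact Finset.sum_le_sum fun x _ =>
      le_of_eq (measure_event_inter hA hB hAB (fun a => x ∈ a ∧ a.card ≤ K)
        (fun b => x ∈ b ∧ b.card ≤ L))
  have h2 : (n : ℝ≥0∞) * ((n : ℝ≥0∞) * μ bad) ≤ (n : ℝ≥0∞) * ((K : ℝ≥0∞) * L) := by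
    calc (n : ℝ≥0∞) * ((n : ℝ≥0∞) * μ bad)
        ≤ (n : ℝ≥0∞) * ((n : ℝ≥0∞) * ∑ x : E,
            μ {ω | x ∈ A ω ∧ (A ω).card ≤ K} * μ {ω | x ∈ B ω ∧ (B ω).card ≤ L}) :=
          mul_le_mul_right (mul_le_mul_right hle _) _
      _ = ∑ x : E, ((n : ℝ≥0∞) * μ {ω | x ∈ A ω ∧ (A ω).card ≤ K}) *
            ((n : ℝ≥0∞) * μ {ω | x ∈ B ω ∧ (B ω).card ≤ L}) := by
          rw [Finset.mul_sum, Finset.mul_sum]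
          exact Finset.sum_congr rfl fun x _ => by ring
      _ ≤ ∑ _x : E, (K : ℝ≥0∞) * L :=
          Finset.sum_le_sum fun x _ =>
            mul_le_mul' (point_bound hA hApi x K) (point_bound hB hBpi x L)
      _ = (n : ℝ≥0∞) * ((K : ℝ≥0∞) * L) := by
          rw [Finset.sum_const, Finset.card_univ, nsmul_eq_mul]
  have hn0 : (n : ℝ≥0∞) ≠ 0 := by exact_mod_cast hpos.ne'
  exact (ENNReal.mul_le_mul_iff_right hn0 (ENNReal.natCast_ne_top n)).1 h2

end helpers2

theorem stmt_14 {E : ℕ → Type*} [∀ n, Fintype (E n)] [∀ n, DecidableEq (E n)]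
    {Ω : ℕ → Type*} [∀ n, MeasurableSpace (Ω n)]
    (μ : ∀ n, Measure (Ω n)) [∀ n, IsProbabilityMeasure (μ n)]
    (hcard : ∀ n, Fintype.card (E n) = n)
    (α β : ℝ) (hα0 : 0 ≤ α) (hα1 : α ≤ 1) (hβ0 : 0 ≤ β) (hβ1 : β ≤ 1)
    (hαβ : α + β < 1)
    (A B : ∀ n, Ω n → Finset (E n))
    (hAmeas : ∀ n (a : Finset (E n)), MeasurableSet {ω | A n ω = a})
    (hBmeas : ∀ n (b : Finset (E n)), MeasurableSet {ω | B n ω = b})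
    (hApi : ∀ n, PermInv (μ n) (A n)) (hBpi : ∀ n, PermInv (μ n) (B n))
    (hAdens : Densable μ A α) (hBdens : Densable μ B β)
    (hAB : ∀ n, IndepRS (μ n) (A n) (B n)) :
    Tendsto (fun n => μ n {ω | A n ω ∩ B n ω = ∅}) atTop (𝓝 1) := by
  classical
  set ε := (1 - α - β) / 3 with hεdef
  have hε : 0 < ε := by rw [hεdef]; linarith
  have hA1 := hAdens ε hε
  have hB1 := hBdens ε hε
  set S : ∀ n, Set (Ω n) := fun n => {ω |
      (Fintype.card (E n) : ℝ) ^ (α - ε) ≤ ((A n ω).card : ℝ)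
        ∧ ((A n ω).card : ℝ) ≤ (Fintype.card (E n) : ℝ) ^ (α + ε)} with hS
  set T : ∀ n, Set (Ω n) := fun n => {ω |
      (Fintype.card (E n) : ℝ) ^ (β - ε) ≤ ((B n ω).card : ℝ)
        ∧ ((B n ω).card : ℝ) ≤ (Fintype.card (E n) : ℝ) ^ (β + ε)} with hT
  set K : ℕ → ℕ := fun n => ⌊(n : ℝ) ^ (α + ε)⌋₊ with hK
  set L : ℕ → ℕ := fun n => ⌊(n : ℝ) ^ (β + ε)⌋₊ with hL
  set bad : ℕ → ℝ≥0∞ := fun n => μ n {ω |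
      (A n ω ∩ B n ω).Nonempty ∧ (A n ω).card ≤ K n ∧ (B n ω).card ≤ L n} with hbaddef
  -- bound on bad
  have hbadle : ∀ n, bad n * n ≤ (K n : ℝ≥0∞) * L n := by
    intro n
    have h := core_bound (μ := μ n) (hAmeas n) (hBmeas n) (hApi n) (hBpi n) (hAB n)
      (K n) (L n)
    rw [hcard n] at h
    rwa [mul_comm] at h
  have hbad0 : Tendsto bad atTop (𝓝 0) := by
    have gtend : Tendsto (fun n : ℕ => ENNReal.ofReal ((n : ℝ) ^ (-ε))) atTop (𝓝 0) := by
      have h1 : Tendsto (fun n : ℕ => (n : ℝ) ^ (-ε)) atTop (𝓝 0) :=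
        (tendsto_rpow_neg_atTop hε).comp tendsto_natCast_atTop_atTop
      have h2 := (ENNReal.continuous_ofReal.tendsto 0).comp h1
      simpa [Function.comp_def] using h2
    refine tendsto_of_tendsto_of_tendsto_of_le_of_le' tendsto_const_nhds gtend
      (Filter.Eventually.of_forall fun n => zero_le) ?_
    filter_upwards [eventually_ge_atTop 1] with n hn
    have hn0 : (0 : ℝ) < (n : ℝ) := by exact_mod_cast hn
    have hnn0 : (n : ℝ≥0∞) ≠ 0 := by exact_mod_cast Nat.one_le_iff_ne_zero.1 hn
    have hb : bad n ≤ (K n : ℝ≥0∞) * L n / n :=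
      (ENNReal.le_div_iff_mul_le (Or.inl hnn0) (Or.inl (ENNReal.natCast_ne_top n))).2
        (hbadle n)
    refine hb.trans ?_
    have hKle : ((K n : ℝ≥0∞) : ℝ≥0∞) ≤ ENNReal.ofReal ((n : ℝ) ^ (α + ε)) := by
      rw [← ENNReal.ofReal_natCast]
      exact ENNReal.ofReal_le_ofReal (Nat.floor_le (Real.rpow_nonneg hn0.le _))
    have hLle : ((L n : ℝ≥0∞) : ℝ≥0∞) ≤ ENNReal.ofReal ((n : ℝ) ^ (β + ε)) := by
      rw [← ENNReal.ofReal_natCast]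
      exact ENNReal.ofReal_le_ofReal (Nat.floor_le (Real.rpow_nonneg hn0.le _))
    calc (K n : ℝ≥0∞) * L n / n
        ≤ ENNReal.ofReal ((n : ℝ) ^ (α + ε)) * ENNReal.ofReal ((n : ℝ) ^ (β + ε)) /
            ENNReal.ofReal (n : ℝ) := by
          rw [ENNReal.ofReal_natCast]
          exact ENNReal.div_le_div (mul_le_mul' hKle hLle) le_rfl
      _ = ENNReal.ofReal ((n : ℝ) ^ (α + ε) * (n : ℝ) ^ (β + ε) / (n : ℝ)) := by
          rw [← ENNReal.ofReal_mul (Real.rpow_nonneg hn0.le _),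
            ← ENNReal.ofReal_div_of_pos hn0]
      _ = ENNReal.ofReal ((n : ℝ) ^ (-ε)) := by
          have hrw : (n : ℝ) ^ (α + ε) * (n : ℝ) ^ (β + ε) / (n : ℝ)
              = (n : ℝ) ^ (α + ε + (β + ε) - 1) := by
            rw [← Real.rpow_add hn0, Real.rpow_sub hn0, Real.rpow_one]
          rw [hrw]
          congr 1
          rw [hεdef]; ring
  -- final part
  have hTmeas : ∀ n, MeasurableSet (T n) := fun n =>
    measurable_event (hBmeas n) (fun b => (Fintype.card (E n) : ℝ) ^ (β - ε) ≤ (b.card : ℝ)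
      ∧ (b.card : ℝ) ≤ (Fintype.card (E n) : ℝ) ^ (β + ε))
  have key : ∀ n, μ n (S n) + μ n (T n)
      ≤ (1 + bad n) + μ n {ω | A n ω ∩ B n ω = ∅} := by
    intro n
    have hsub : S n ∩ T n ⊆ {ω | A n ω ∩ B n ω = ∅} ∪ {ω |
        (A n ω ∩ B n ω).Nonempty ∧ (A n ω).card ≤ K n ∧ (B n ω).card ≤ L n} := by
      rintro ω ⟨⟨_, hSu⟩, _, hTu⟩
      rcases Finset.eq_empty_or_nonempty (A n ω ∩ B n ω) with he | hne
      · exact Or.inl he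
      · refine Or.inr ⟨hne, ?_, ?_⟩
        · exact Nat.le_floor (by rw [hcard n] at hSu; exact hSu)
        · exact Nat.le_floor (by rw [hcard n] at hTu; exact hTu)
    calc μ n (S n) + μ n (T n) = μ n (S n ∪ T n) + μ n (S n ∩ T n) :=
        (measure_union_add_inter (S n) (hTmeas n)).symm
      _ ≤ 1 + (μ n {ω | A n ω ∩ B n ω = ∅} + bad n) := add_le_add prob_le_one
          ((measure_mono hsub).trans (measure_union_le _ _))
      _ = (1 + bad n) + μ n {ω | A n ω ∩ B n ω = ∅} := by ring
  have hlow : ∀ n, μ n (S n) + μ n (T n) - (1 + bad n)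
      ≤ μ n {ω | A n ω ∩ B n ω = ∅} := fun n => tsub_le_iff_left.2 (key n)
  have hlowtend : Tendsto (fun n => μ n (S n) + μ n (T n) - (1 + bad n)) atTop (𝓝 1) := by
    have h := ENNReal.Tendsto.sub (hA1.add hB1)
      ((tendsto_const_nhds : Tendsto (fun _ : ℕ => (1 : ℝ≥0∞)) atTop (𝓝 1)).add hbad0)
      (Or.inl (by norm_num))
    have h2 : ((1 : ℝ≥0∞) + 1) - (1 + 0) = 1 := by
      rw [add_zero]
      exact ENNReal.add_sub_cancel_right ENNReal.one_ne_top
    rw [h2] at h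
    exact h
  exact tendsto_of_tendsto_of_tendsto_of_le_of_le hlowtend tendsto_const_nhds hlow
    fun n => prob_le_one
end

section
/- Let (E_n) be finite sets with |E_n| = n and let (A_n), (B_n) be densable sequences of permutation invariant random subsets of (E_n), independent for each n, with densities α and β respectively where α + β > 1. Then (A_n ∩ B_n) is densable with density α + β - 1: for every ε > 0, Pr(n^{α+β-1-ε} ≤ |A_n ∩ B_n| ≤ n^{α+β-1+ε}) → 1. -/
open MeasureTheory ProbabilityTheory Filter
open scoped ENNReal Topology

section Aux
open Finset
variable {E : Type*} [Fintype E] [DecidableEq E]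

lemma count_one (x : E) {a : ℕ} (ha : 1 ≤ a) :
    ((univ.powersetCard a).filter (fun s => x ∈ s)).card
      = (Fintype.card E - 1).choose (a - 1) := by
  have h1 : (univ.erase x).card = Fintype.card E - 1 := by
    rw [card_erase_of_mem (mem_univ x), card_univ]
  rw [← h1, ← Finset.card_powersetCard (a-1) (univ.erase x)]
  apply Finset.card_bij' (fun s _ => s.erase x) (fun t _ => insert x t)
  · intro s hs
    simp only [mem_filter] at hs
    exact insert_erase hs.2
  · intro t ht
    simp only [mem_powersetCard] at ht
    have hx : x ∉ t := fun hx => (mem_erase.1 (ht.1 hx)).1 rfl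
    exact erase_insert hx
  · intro s hs
    simp only [mem_filter, mem_powersetCard_univ] at hs
    simp only [mem_powersetCard]
    exact ⟨erase_subset_erase x (subset_univ s), by rw [card_erase_of_mem hs.2, hs.1]⟩
  · intro t ht
    simp only [mem_powersetCard] at ht
    have hx : x ∉ t := fun hx => (mem_erase.1 (ht.1 hx)).1 rfl
    simp only [mem_filter, mem_powersetCard_univ]
    refine ⟨by rw [card_insert_of_notMem hx, ht.2]; omega, mem_insert_self x t⟩

lemma count_two {x y : E} (hxy : x ≠ y) {a : ℕ} (ha : 2 ≤ a) :
    ((univ.powersetCard a).filter (fun s => x ∈ s ∧ y ∈ s)).card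
      = (Fintype.card E - 2).choose (a - 2) := by
  have hcard : ((univ.erase x).erase y).card = Fintype.card E - 2 := by
    rw [card_erase_of_mem (mem_erase.2 ⟨hxy.symm, mem_univ y⟩), card_erase_of_mem (mem_univ x),
      card_univ]
    omega
  rw [← hcard, ← Finset.card_powersetCard (a-2) ((univ.erase x).erase y)]
  apply Finset.card_bij' (fun s _ => (s.erase x).erase y) (fun t _ => insert x (insert y t))
  · intro s hs
    simp only [mem_filter] at hs
    rw [insert_erase (mem_erase.2 ⟨hxy.symm, hs.2.2⟩), insert_erase hs.2.1]
  · intro t ht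
    simp only [mem_powersetCard] at ht
    have hyt : y ∉ t := fun h => (mem_erase.1 (ht.1 h)).1 rfl
    have hxt : x ∉ t := fun h => (mem_erase.1 (mem_of_mem_erase (ht.1 h))).1 rfl
    have hxyt : x ∉ insert y t := by simp [hxy, hxt]
    rw [erase_insert hxyt, erase_insert hyt]
  · intro s hs
    simp only [mem_filter, mem_powersetCard_univ] at hs
    simp only [mem_powersetCard]
    constructor
    · exact erase_subset_erase y (erase_subset_erase x (subset_univ s))
    · rw [card_erase_of_mem (mem_erase.2 ⟨hxy.symm, hs.2.2⟩), card_erase_of_mem hs.2.1, hs.1]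
      omega
  · intro t ht
    simp only [mem_powersetCard] at ht
    have hyt : y ∉ t := fun h => (mem_erase.1 (ht.1 h)).1 rfl
    have hxt : x ∉ t := fun h => (mem_erase.1 (mem_of_mem_erase (ht.1 h))).1 rfl
    have hxyt : x ∉ insert y t := by simp [hxy, hxt]
    simp only [mem_filter, mem_powersetCard_univ]
    refine ⟨?_, mem_insert_self _ _, mem_insert_of_mem (mem_insert_self _ _)⟩
    rw [card_insert_of_notMem hxyt, card_insert_of_notMem hyt, ht.2]
    omega

lemma sum_card_inter {a b : ℕ} (ha : 1 ≤ a) (hb : 1 ≤ b) :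
    ∑ s ∈ powersetCard a (univ : Finset E), ∑ t ∈ powersetCard b (univ : Finset E), (s ∩ t).card
      = Fintype.card E *
        ((Fintype.card E - 1).choose (a-1) * (Fintype.card E - 1).choose (b-1)) := by
  have hrepr : ∀ s t : Finset E, (s ∩ t).card
      = ∑ x : E, (if x ∈ s then 1 else 0) * (if x ∈ t then 1 else 0) := by
    intro s t
    have h : s ∩ t = univ.filter (fun x => x ∈ s ∧ x ∈ t) := by
      ext x; simp [mem_inter]
    rw [h, card_filter]
    refine Finset.sum_congr rfl fun x _ => ?_
    by_cases h1 : x ∈ s <;> by_cases h2 : x ∈ t <;> simp [h1, h2]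
  simp only [hrepr]
  calc ∑ s ∈ powersetCard a (univ : Finset E), ∑ t ∈ powersetCard b (univ : Finset E),
        ∑ x : E, (if x ∈ s then 1 else 0) * (if x ∈ t then 1 else 0)
      = ∑ s ∈ powersetCard a (univ : Finset E), ∑ x : E, ∑ t ∈ powersetCard b (univ : Finset E),
        (if x ∈ s then 1 else 0) * (if x ∈ t then 1 else 0) :=
        Finset.sum_congr rfl fun s _ => Finset.sum_comm
    _ = ∑ x : E, ∑ s ∈ powersetCard a (univ : Finset E), ∑ t ∈ powersetCard b (univ : Finset E),
        (if x ∈ s then 1 else 0) * (if x ∈ t then 1 else 0) := Finset.sum_comm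
    _ = ∑ x : E, ((Fintype.card E - 1).choose (a-1) * (Fintype.card E - 1).choose (b-1)) := by
        refine Finset.sum_congr rfl fun x _ => ?_
        rw [← Finset.sum_mul_sum]
        rw [Finset.sum_boole, Finset.sum_boole]
        push_cast
        rw [count_one x ha, count_one x hb]
    _ = _ := by rw [Finset.sum_const, card_univ, smul_eq_mul]

lemma sum_offdiag_inter {a b : ℕ} (ha : 2 ≤ a) (hb : 2 ≤ b) :
    ∑ s ∈ powersetCard a (univ : Finset E), ∑ t ∈ powersetCard b (univ : Finset E),
        (s ∩ t).offDiag.card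
      = (univ : Finset E).offDiag.card *
        ((Fintype.card E - 2).choose (a-2) * (Fintype.card E - 2).choose (b-2)) := by
  have hrepr : ∀ s t : Finset E, (s ∩ t).offDiag.card
      = ∑ p ∈ (univ : Finset E).offDiag,
          (if p.1 ∈ s ∧ p.2 ∈ s then 1 else 0) * (if p.1 ∈ t ∧ p.2 ∈ t then 1 else 0) := by
    intro s t
    have h : (s ∩ t).offDiag
        = (univ : Finset E).offDiag.filter
            (fun p => (p.1 ∈ s ∧ p.2 ∈ s) ∧ (p.1 ∈ t ∧ p.2 ∈ t)) := by
      ext ⟨x, y⟩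
      simp only [mem_offDiag, mem_filter, mem_inter, mem_univ, true_and]
      tauto
    rw [h, card_filter]
    refine Finset.sum_congr rfl fun p _ => ?_
    by_cases h1 : p.1 ∈ s ∧ p.2 ∈ s <;> by_cases h2 : p.1 ∈ t ∧ p.2 ∈ t <;> simp [h1, h2]
  simp only [hrepr]
  calc ∑ s ∈ powersetCard a (univ : Finset E), ∑ t ∈ powersetCard b (univ : Finset E),
        ∑ p ∈ (univ : Finset E).offDiag,
          (if p.1 ∈ s ∧ p.2 ∈ s then 1 else 0) * (if p.1 ∈ t ∧ p.2 ∈ t then 1 else 0)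
      = ∑ s ∈ powersetCard a (univ : Finset E), ∑ p ∈ (univ : Finset E).offDiag,
        ∑ t ∈ powersetCard b (univ : Finset E),
          (if p.1 ∈ s ∧ p.2 ∈ s then 1 else 0) * (if p.1 ∈ t ∧ p.2 ∈ t then 1 else 0) :=
        Finset.sum_congr rfl fun s _ => Finset.sum_comm
    _ = ∑ p ∈ (univ : Finset E).offDiag, ∑ s ∈ powersetCard a (univ : Finset E),
        ∑ t ∈ powersetCard b (univ : Finset E),
          (if p.1 ∈ s ∧ p.2 ∈ s then 1 else 0) * (if p.1 ∈ t ∧ p.2 ∈ t then 1 else 0) :=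
        Finset.sum_comm
    _ = ∑ p ∈ (univ : Finset E).offDiag,
        ((Fintype.card E - 2).choose (a-2) * (Fintype.card E - 2).choose (b-2)) := by
        refine Finset.sum_congr rfl fun p hp => ?_
        have hne : p.1 ≠ p.2 := (Finset.mem_offDiag.1 hp).2.2
        rw [← Finset.sum_mul_sum, Finset.sum_boole, Finset.sum_boole]
        push_cast
        rw [count_two hne ha, count_two hne hb]
    _ = _ := by rw [Finset.sum_const, smul_eq_mul]

lemma id1 {n a : ℕ} (ha : 1 ≤ a) (han : a ≤ n) :
    a * n.choose a = n * (n-1).choose (a-1) := by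
  obtain ⟨m, rfl⟩ : ∃ m, n = m + 1 := ⟨n - 1, by omega⟩
  obtain ⟨c, rfl⟩ : ∃ c, a = c + 1 := ⟨a - 1, by omega⟩
  simpa [Nat.mul_comm] using (Nat.add_one_mul_choose_eq m c).symm

lemma id2 {n a : ℕ} (ha : 2 ≤ a) (han : a ≤ n) :
    a * (a-1) * n.choose a = n * (n-1) * (n-2).choose (a-2) := by
  have h1 := id1 (show 1 ≤ a by omega) han
  have h2 := id1 (show 1 ≤ a - 1 by omega) (show a - 1 ≤ n - 1 by omega)
  have e1 : n - 1 - 1 = n - 2 := by omega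
  have e2 : a - 1 - 1 = a - 2 := by omega
  rw [e1, e2] at h2
  calc a * (a-1) * n.choose a = (a-1) * (a * n.choose a) := by ring
    _ = (a-1) * (n * (n-1).choose (a-1)) := by rw [h1]
    _ = n * ((a-1) * (n-1).choose (a-1)) := by ring
    _ = n * ((n-1) * (n-2).choose (a-2)) := by rw [h2]
    _ = _ := by ring

set_option maxHeartbeats 1000000 in
lemma key_count {a b : ℕ} (ha : 2 ≤ a) (han : a ≤ Fintype.card E)
    (hb : 2 ≤ b) (hbn : b ≤ Fintype.card E) :
    ((((powersetCard a (univ : Finset E)) ×ˢ (powersetCard b (univ : Finset E))).filter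
        (fun p => ((a : ℝ) * b) / 2 ≤
          |(Fintype.card E : ℝ) * ((p.1 ∩ p.2).card : ℝ) - (a : ℝ) * b|)).card : ℝ) * (a * b)
      ≤ 4 * Fintype.card E *
        (((Fintype.card E).choose a : ℝ) * ((Fintype.card E).choose b : ℝ)) := by
  set n := Fintype.card E with hn
  have hn2 : 2 ≤ n := le_trans ha han
  set P := (powersetCard a (univ : Finset E)) ×ˢ (powersetCard b (univ : Finset E)) with hP
  set X : Finset E × Finset E → ℝ := fun p => ((p.1 ∩ p.2).card : ℝ) with hX
  set CC : ℝ := ((n.choose a : ℝ) * (n.choose b : ℝ)) with hCC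
  -- sums
  have hSX : (n : ℝ) * ∑ p ∈ P, X p = (a : ℝ) * b * CC := by
    have hnat : n * (∑ s ∈ powersetCard a (univ : Finset E),
        ∑ t ∈ powersetCard b (univ : Finset E), (s ∩ t).card)
        = (a * n.choose a) * (b * n.choose b) := by
      rw [sum_card_inter (by omega) (by omega),
        id1 (by omega : 1 ≤ a) han, id1 (by omega : 1 ≤ b) hbn]
      ring
    have := congrArg (fun k : ℕ => (k : ℝ)) hnat
    push_cast at this
    rw [hP, hX]
    rw [Finset.sum_product]
    push_cast
    rw [this]
    try rw [hCC]
    try ring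
  have hSXX : (n : ℝ) * ((n : ℝ) - 1) * ∑ p ∈ P, (X p ^ 2 - X p)
      = (a : ℝ) * ((a:ℝ) - 1) * b * ((b:ℝ) - 1) * CC := by
    have hoffd : (univ : Finset E).offDiag.card = n * (n - 1) := by
      rw [Finset.offDiag_card, card_univ, ← hn, Nat.mul_sub_one]
    have hnat : n * (n-1) * (∑ s ∈ powersetCard a (univ : Finset E),
        ∑ t ∈ powersetCard b (univ : Finset E), (s ∩ t).offDiag.card)
        = (a * (a-1) * n.choose a) * (b * (b-1) * n.choose b) := by
      rw [sum_offdiag_inter ha hb, hoffd, id2 ha han, id2 hb hbn]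
      ring
    have hxr : ∀ p ∈ P, (X p ^ 2 - X p) = (((p.1 ∩ p.2).offDiag.card : ℕ) : ℝ) := by
      intro p _
      rw [Finset.offDiag_card]
      have hle : (p.1 ∩ p.2).card ≤ (p.1 ∩ p.2).card * (p.1 ∩ p.2).card := by
        rcases Nat.eq_zero_or_pos (p.1 ∩ p.2).card with h | h
        · simp [h]
        · exact Nat.le_mul_of_pos_left _ h
      rw [Nat.cast_sub hle]
      push_cast
      ring
    have hsum : ∑ p ∈ P, (X p ^ 2 - X p)
        = ((∑ s ∈ powersetCard a (univ : Finset E), ∑ t ∈ powersetCard b (univ : Finset E),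
            (s ∩ t).offDiag.card : ℕ) : ℝ) := by
      rw [Finset.sum_congr rfl hxr, hP, Finset.sum_product]
      push_cast
      rfl
    have hthis := congrArg (fun k : ℕ => (k : ℝ)) hnat
    push_cast at hthis
    have en : (((n - 1 : ℕ)) : ℝ) = (n : ℝ) - 1 := by
      rw [Nat.cast_sub (by omega)]; norm_num
    have ea : (((a - 1 : ℕ)) : ℝ) = (a : ℝ) - 1 := by
      rw [Nat.cast_sub (by omega)]; norm_num
    have eb : (((b - 1 : ℕ)) : ℝ) = (b : ℝ) - 1 := by
      rw [Nat.cast_sub (by omega)]; norm_num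
    rw [en, ea, eb] at hthis
    rw [hsum, hCC]
    push_cast
    linear_combination hthis
  -- remaining steps
  have hPcard : ((P.card : ℕ) : ℝ) = CC := by
    rw [hP, Finset.card_product, Finset.card_powersetCard, Finset.card_powersetCard,
      card_univ, ← hn, hCC]
    push_cast; ring
  have e1 : ∑ p ∈ P, ((n : ℝ) * X p - (a:ℝ) * b)^2
      = (n:ℝ)^2 * (∑ p ∈ P, (X p ^ 2 - X p)) + ((n:ℝ)^2 - 2*a*b*n) * (∑ p ∈ P, X p)
        + (a:ℝ)^2 * (b:ℝ)^2 * CC := by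
    have hterm : ∀ p ∈ P, ((n : ℝ) * X p - (a:ℝ) * b)^2
        = (n:ℝ)^2 * (X p ^ 2 - X p) + ((n:ℝ)^2 - 2*a*b*n) * X p + (a:ℝ)^2 * (b:ℝ)^2 :=
      fun p _ => by ring
    rw [Finset.sum_congr rfl hterm, Finset.sum_add_distrib, Finset.sum_add_distrib,
      ← Finset.mul_sum, ← Finset.mul_sum, Finset.sum_const, nsmul_eq_mul, hPcard]
    ring
  have hCC0 : (0:ℝ) ≤ CC := by rw [hCC]; positivity
  have hn0 : (0:ℝ) ≤ (n:ℝ) := by positivity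
  have hab0 : (0:ℝ) < (a:ℝ) * b := by
    have : (0:ℝ) < (a:ℝ) := by exact_mod_cast (by omega : 0 < a)
    have : (0:ℝ) < (b:ℝ) := by exact_mod_cast (by omega : 0 < b)
    positivity
  have key : (n:ℝ) * ((a:ℝ)-1) * ((b:ℝ)-1) ≤ ((n:ℝ)-1) * ((a:ℝ)*b) := by
    have hra : (1:ℝ) ≤ (a:ℝ) := by exact_mod_cast (by omega : 1 ≤ a)
    have hrb : (1:ℝ) ≤ (b:ℝ) := by exact_mod_cast (by omega : 1 ≤ b)
    have hran : (a:ℝ) ≤ (n:ℝ) := by exact_mod_cast han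
    have h1 : (a:ℝ) * b ≤ (n:ℝ) * b := by nlinarith
    have h2 : (n:ℝ) ≤ (n:ℝ) * a := by nlinarith
    nlinarith
  have hpos : (0:ℝ) < (n:ℝ) * ((n:ℝ)-1) := by
    have : (2:ℝ) ≤ (n:ℝ) := by exact_mod_cast hn2
    nlinarith
  have hmul : (n:ℝ)*((n:ℝ)-1) * (∑ p ∈ P, ((n : ℝ) * X p - (a:ℝ) * b)^2)
      ≤ (n:ℝ)*((n:ℝ)-1) * ((n:ℝ) * ((a:ℝ)*b) * CC) := by
    rw [e1]
    have expand : (n:ℝ)*((n:ℝ)-1) * ((n:ℝ)^2 * (∑ p ∈ P, (X p ^ 2 - X p))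
          + ((n:ℝ)^2 - 2*a*b*n) * (∑ p ∈ P, X p) + (a:ℝ)^2 * (b:ℝ)^2 * CC)
        = (n:ℝ)^2 * ((n:ℝ)*((n:ℝ)-1) * ∑ p ∈ P, (X p ^ 2 - X p))
          + ((n:ℝ)-1)*((n:ℝ)^2 - 2*a*b*n) * ((n:ℝ) * ∑ p ∈ P, X p)
          + (n:ℝ)*((n:ℝ)-1)*(a:ℝ)^2 * (b:ℝ)^2 * CC := by ring
    rw [expand, hSXX, hSX]
    have hint := mul_nonneg (mul_nonneg (mul_nonneg hn0 (le_of_lt hab0)) hCC0)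
      (sub_nonneg.2 key)
    nlinarith [hint]
  have hsq : ∑ p ∈ P, ((n : ℝ) * X p - (a:ℝ) * b)^2 ≤ (n:ℝ) * ((a:ℝ)*b) * CC :=
    (mul_le_mul_iff_right₀ hpos).mp hmul
  set S := P.filter (fun p => ((a : ℝ) * b) / 2 ≤
      |(n : ℝ) * ((p.1 ∩ p.2).card : ℝ) - (a : ℝ) * b|) with hS
  have hb1 : (S.card : ℝ) * (((a:ℝ)*b)/2)^2 ≤ ∑ p ∈ S, ((n : ℝ) * X p - (a:ℝ) * b)^2 := by
    have := Finset.card_nsmul_le_sum S (fun p => ((n : ℝ) * X p - (a:ℝ) * b)^2)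
      ((((a:ℝ)*b)/2)^2) ?_
    · rwa [nsmul_eq_mul] at this
    · intro p hp
      rw [hS, Finset.mem_filter] at hp
      have habs : ((a:ℝ)*b)/2 ≤ |(n : ℝ) * X p - (a:ℝ) * b| := hp.2
      calc (((a:ℝ)*b)/2)^2 ≤ |(n : ℝ) * X p - (a:ℝ) * b|^2 := by
            apply pow_le_pow_left₀ (by positivity) habs
        _ = ((n : ℝ) * X p - (a:ℝ) * b)^2 := sq_abs _
  have hb2 : ∑ p ∈ S, ((n : ℝ) * X p - (a:ℝ) * b)^2
      ≤ ∑ p ∈ P, ((n : ℝ) * X p - (a:ℝ) * b)^2 :=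
    Finset.sum_le_sum_of_subset_of_nonneg (Finset.filter_subset _ _)
      (fun _ _ _ => sq_nonneg _)
  have hfinal : (S.card : ℝ) * (((a:ℝ)*b)/2)^2 ≤ (n:ℝ) * ((a:ℝ)*b) * CC :=
    le_trans hb1 (le_trans hb2 hsq)
  have goal' : (S.card : ℝ) * ((a:ℝ)*b) ≤ 4 * (n:ℝ) * CC := by
    apply le_of_mul_le_mul_right _ (show (0:ℝ) < ((a:ℝ)*b)/4 by positivity)
    calc (S.card : ℝ) * ((a:ℝ)*b) * (((a:ℝ)*b)/4) = (S.card : ℝ) * (((a:ℝ)*b)/2)^2 := by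
          ring
      _ ≤ (n:ℝ) * ((a:ℝ)*b) * CC := hfinal
      _ = 4 * (n:ℝ) * CC * (((a:ℝ)*b)/4) := by ring
  exact goal'

lemma exists_perm_image {s t : Finset E} (h : s.card = t.card) :
    ∃ σ : Equiv.Perm E, s.image σ = t := by
  have h1 : Fintype.card {x // x ∈ s} = Fintype.card {x // x ∈ t} := by
    simp only [Fintype.card_coe, h]
  have h2 : Fintype.card {x // ¬ x ∈ s} = Fintype.card {x // ¬ x ∈ t} := by
    rw [Fintype.card_subtype_compl, Fintype.card_subtype_compl]
    simp only [Fintype.card_coe, h]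
  set e := Fintype.equivOfCardEq h1 with he
  set f := Fintype.equivOfCardEq h2 with hf
  refine ⟨Equiv.subtypeCongr e f, ?_⟩
  apply Finset.eq_of_subset_of_card_le
  · intro y hy
    rw [Finset.mem_image] at hy
    obtain ⟨x, hx, rfl⟩ := hy
    have : Equiv.subtypeCongr e f x = (e ⟨x, hx⟩ : E) := by
      simp [Equiv.subtypeCongr, hx]
    rw [this]
    exact (e ⟨x, hx⟩).2
  · rw [Finset.card_image_of_injective _ (Equiv.injective _), h]

lemma measJointRS {E Ω : Type*} [Fintype E] [DecidableEq E] [MeasurableSpace Ω]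
    (A B : Ω → Finset E)
    (hAmeas : ∀ a : Finset E, MeasurableSet {ω | A ω = a})
    (hBmeas : ∀ b : Finset E, MeasurableSet {ω | B ω = b})
    (p : Finset E → Finset E → Prop) : MeasurableSet {ω | p (A ω) (B ω)} := by
  have h : {ω | p (A ω) (B ω)} = ⋃ (s : Finset E), ⋃ (t : Finset E), ⋃ (_ : p s t),
      ({ω | A ω = s} ∩ {ω | B ω = t}) := by
    ext ω
    simp only [Set.mem_iUnion, Set.mem_inter_iff, Set.mem_setOf_eq]
    constructor
    · intro h; exact ⟨A ω, B ω, h, rfl, rfl⟩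
    · rintro ⟨s, t, h, h1, h2⟩; rw [h1, h2]; exact h
  rw [h]
  exact MeasurableSet.iUnion fun s => MeasurableSet.iUnion fun t =>
    MeasurableSet.iUnion fun _ => (hAmeas s).inter (hBmeas t)

set_option maxHeartbeats 1000000 in
lemma coreRS {Ω : Type*} [MeasurableSpace Ω] (μ : Measure Ω) [IsProbabilityMeasure μ]
    (A B : Ω → Finset E)
    (hAmeas : ∀ a : Finset E, MeasurableSet {ω | A ω = a})
    (hBmeas : ∀ b : Finset E, MeasurableSet {ω | B ω = b})
    (hApi : PermInv μ A) (hBpi : PermInv μ B)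
    (hAB : ∀ a b : Finset E,
      μ ({ω | A ω = a} ∩ {ω | B ω = b}) = μ {ω | A ω = a} * μ {ω | B ω = b})
    (loA hiA loB hiB lo hi δ : ℝ)
    (hδ0 : 0 ≤ δ)
    (hloA : 2 ≤ loA) (hloB : 2 ≤ loB)
    (hδ : ∀ x y : ℝ, loA ≤ x → loB ≤ y → 4 * (Fintype.card E : ℝ) ≤ δ * (x * y))
    (hlo : ∀ x y : ℝ, loA ≤ x → loB ≤ y → 2 * lo * (Fintype.card E : ℝ) ≤ x * y)
    (hhi : ∀ x y : ℝ, 0 ≤ x → 0 ≤ y → x ≤ hiA → y ≤ hiB →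
      3 * (x * y) ≤ 2 * hi * (Fintype.card E : ℝ)) :
    μ {ω | ¬ (lo ≤ (((A ω ∩ B ω).card : ℕ) : ℝ) ∧ (((A ω ∩ B ω).card : ℕ) : ℝ) ≤ hi)}
      ≤ μ {ω | ¬ (loA ≤ (((A ω).card : ℕ) : ℝ) ∧ (((A ω).card : ℕ) : ℝ) ≤ hiA)}
        + μ {ω | ¬ (loB ≤ (((B ω).card : ℕ) : ℝ) ∧ (((B ω).card : ℕ) : ℝ) ≤ hiB)}
        + ENNReal.ofReal δ := by
  classical
  set n := Fintype.card E with hn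
  -- measurability of joint events
  have measJoint : ∀ (p : Finset E → Finset E → Prop), MeasurableSet {ω | p (A ω) (B ω)} := by
    intro p
    have h : {ω | p (A ω) (B ω)} = ⋃ (s : Finset E), ⋃ (t : Finset E), ⋃ (_ : p s t),
        ({ω | A ω = s} ∩ {ω | B ω = t}) := by
      ext ω
      simp only [Set.mem_iUnion, Set.mem_inter_iff, Set.mem_setOf_eq]
      constructor
      · intro h; exact ⟨A ω, B ω, h, rfl, rfl⟩
      · rintro ⟨s, t, h, h1, h2⟩; rw [h1, h2]; exact h
    rw [h]
    exact MeasurableSet.iUnion fun s => MeasurableSet.iUnion fun t =>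
      MeasurableSet.iUnion fun _ => (hAmeas s).inter (hBmeas t)
  have lawA : ∀ s t : Finset E, s.card = t.card → μ {ω | A ω = s} = μ {ω | A ω = t} := by
    intro s t h
    obtain ⟨σ, hσ⟩ := exists_perm_image h
    rw [hApi s σ, hσ]
  have lawB : ∀ s t : Finset E, s.card = t.card → μ {ω | B ω = s} = μ {ω | B ω = t} := by
    intro s t h
    obtain ⟨σ, hσ⟩ := exists_perm_image h
    rw [hBpi s σ, hσ]
  -- bad pair sets and events
  set Bad : ℕ → ℕ → Finset (Finset E × Finset E) := fun a b =>
    ((powersetCard a (univ : Finset E)) ×ˢ (powersetCard b (univ : Finset E))).filter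
      (fun p => ((a : ℝ) * b) / 2 ≤ |(n : ℝ) * ((p.1 ∩ p.2).card : ℝ) - (a : ℝ) * b|)
    with hBad
  set Fail : ℕ → ℕ → Set Ω := fun a b => {ω | (A ω, B ω) ∈ Bad a b} with hFail
  set C : ℕ → ℕ → Set Ω := fun a b => {ω | (A ω).card = a ∧ (B ω).card = b} with hC
  set Gset : Finset (ℕ × ℕ) := ((range (n+1)) ×ˢ (range (n+1))).filter
    (fun q => loA ≤ (q.1 : ℝ) ∧ (q.1 : ℝ) ≤ hiA ∧ loB ≤ (q.2 : ℝ) ∧ (q.2 : ℝ) ≤ hiB)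
    with hGset
  -- disjoint union measure helper
  have disj : ∀ (W : Finset (Finset E × Finset E)),
      (↑W : Set (Finset E × Finset E)).PairwiseDisjoint
        (fun p => ({ω | A ω = p.1} ∩ {ω | B ω = p.2})) := by
    intro W p _ q _ hpq
    apply Set.disjoint_left.2
    rintro ω ⟨h1, h2⟩ ⟨h3, h4⟩
    exact hpq (Prod.ext (h1 ▸ h3 ▸ rfl) (h2 ▸ h4 ▸ rfl))
  have union_meas : ∀ (W : Finset (Finset E × Finset E)),
      μ (⋃ p ∈ W, ({ω | A ω = p.1} ∩ {ω | B ω = p.2}))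
        = ∑ p ∈ W, μ {ω | A ω = p.1} * μ {ω | B ω = p.2} := by
    intro W
    rw [measure_biUnion_finset (disj W) (fun p _ => (hAmeas p.1).inter (hBmeas p.2))]
    exact Finset.sum_congr rfl fun p _ => hAB p.1 p.2
  -- per-pair estimate
  have pair_est : ∀ q ∈ Gset, μ (Fail q.1 q.2) ≤ ENNReal.ofReal δ * μ (C q.1 q.2) := by
    rintro ⟨a, b⟩ hq
    rw [hGset, Finset.mem_filter, Finset.mem_product, Finset.mem_range, Finset.mem_range] at hq
    obtain ⟨⟨han, hbn⟩, hlq1, hlq2, hlq3, hlq4⟩ := hq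
    have han' : a ≤ n := by omega
    have hbn' : b ≤ n := by omega
    have ha2 : 2 ≤ a := by exact_mod_cast le_trans hloA hlq1
    have hb2 : 2 ≤ b := by exact_mod_cast le_trans hloB hlq3
    have hab0 : (0:ℝ) < (a:ℝ) * b := by
      have h1 : (0:ℝ) < (a:ℝ) := by exact_mod_cast (by omega : 0 < a)
      have h2 : (0:ℝ) < (b:ℝ) := by exact_mod_cast (by omega : 0 < b)
      positivity
    -- counting bound
    have hcount : ((Bad a b).card : ℝ) ≤ δ * ((n.choose a : ℝ) * (n.choose b : ℝ)) := by
      have h1 := key_count (E := E) ha2 han' hb2 hbn'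
      have h2 := hδ (a : ℝ) (b : ℝ) hlq1 hlq3
      have h3 : δ * ((a:ℝ) * b) * ((n.choose a : ℝ) * (n.choose b : ℝ))
          ≤ δ * ((n.choose a : ℝ) * (n.choose b : ℝ)) * ((a:ℝ)*b) := le_of_eq (by ring)
      have hCC0 : (0:ℝ) ≤ (n.choose a : ℝ) * (n.choose b : ℝ) := by positivity
      apply le_of_mul_le_mul_right _ hab0
      calc ((Bad a b).card : ℝ) * ((a:ℝ)*b) ≤ 4 * (n:ℝ) * ((n.choose a : ℝ) * (n.choose b : ℝ)) := h1
        _ ≤ δ * ((a:ℝ) * b) * ((n.choose a : ℝ) * (n.choose b : ℝ)) := by nlinarith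
        _ = δ * ((n.choose a : ℝ) * (n.choose b : ℝ)) * ((a:ℝ)*b) := by ring
    -- representatives
    obtain ⟨s₀, hs₀⟩ := Finset.powersetCard_nonempty.2
      (by rw [card_univ, ← hn]; exact han' : a ≤ (univ : Finset E).card)
    obtain ⟨t₀, ht₀⟩ := Finset.powersetCard_nonempty.2
      (by rw [card_univ, ← hn]; exact hbn' : b ≤ (univ : Finset E).card)
    have hs₀c : s₀.card = a := (mem_powersetCard_univ).1 hs₀
    have ht₀c : t₀.card = b := (mem_powersetCard_univ).1 ht₀
    set v : ℝ≥0∞ := μ {ω | A ω = s₀} * μ {ω | B ω = t₀} with hv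
    have term_eq : ∀ p ∈ (powersetCard a (univ : Finset E)) ×ˢ (powersetCard b (univ : Finset E)),
        μ {ω | A ω = p.1} * μ {ω | B ω = p.2} = v := by
      rintro ⟨s, t⟩ hp
      rw [Finset.mem_product] at hp
      have h1 : s.card = s₀.card := by
        rw [(mem_powersetCard_univ).1 hp.1, hs₀c]
      have h2 : t.card = t₀.card := by
        rw [(mem_powersetCard_univ).1 hp.2, ht₀c]
      rw [hv, lawA _ _ h1, lawB _ _ h2]
    -- measure of Fail
    have hFailEq : Fail a b = ⋃ p ∈ Bad a b, ({ω | A ω = p.1} ∩ {ω | B ω = p.2}) := by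
      rw [hFail]
      ext ω
      simp only [Set.mem_setOf_eq, Set.mem_iUnion, Set.mem_inter_iff]
      constructor
      · intro h; exact ⟨(A ω, B ω), h, rfl, rfl⟩
      · rintro ⟨p, hp, h1, h2⟩
        have : (A ω, B ω) = p := Prod.ext h1 h2
        rw [this]; exact hp
    have hBadSub : Bad a b ⊆ (powersetCard a (univ : Finset E)) ×ˢ (powersetCard b (univ : Finset E)) := by
      rw [hBad]; exact Finset.filter_subset _ _
    have hFailMeas : μ (Fail a b) = ((Bad a b).card : ℝ≥0∞) * v := by
      rw [hFailEq, union_meas,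
        Finset.sum_congr rfl (fun p hp => term_eq p (hBadSub hp)), Finset.sum_const,
        nsmul_eq_mul]
    -- measure of C
    have hCEq : C a b = ⋃ p ∈ (powersetCard a (univ : Finset E)) ×ˢ (powersetCard b (univ : Finset E)),
        ({ω | A ω = p.1} ∩ {ω | B ω = p.2}) := by
      rw [hC]
      ext ω
      simp only [Set.mem_setOf_eq, Set.mem_iUnion, Set.mem_inter_iff]
      constructor
      · intro h
        refine ⟨(A ω, B ω), ?_, rfl, rfl⟩
        rw [Finset.mem_product]
        exact ⟨mem_powersetCard_univ.2 h.1, mem_powersetCard_univ.2 h.2⟩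
      · rintro ⟨p, hp, h1, h2⟩
        rw [Finset.mem_product] at hp
        constructor
        · rw [h1]; exact mem_powersetCard_univ.1 hp.1
        · rw [h2]; exact mem_powersetCard_univ.1 hp.2
    have hCMeas : μ (C a b) = ((n.choose a : ℝ≥0∞) * (n.choose b : ℝ≥0∞)) * v := by
      rw [hCEq, union_meas, Finset.sum_congr rfl term_eq, Finset.sum_const, nsmul_eq_mul,
        Finset.card_product, Finset.card_powersetCard, Finset.card_powersetCard, card_univ, ← hn]
      push_cast
      ring
    -- combine
    have hcard_le : ((Bad a b).card : ℝ≥0∞)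
        ≤ ENNReal.ofReal δ * ((n.choose a : ℝ≥0∞) * (n.choose b : ℝ≥0∞)) := by
      calc ((Bad a b).card : ℝ≥0∞) = ENNReal.ofReal (((Bad a b).card : ℝ)) := by
            rw [ENNReal.ofReal_natCast]
        _ ≤ ENNReal.ofReal (δ * ((n.choose a : ℝ) * (n.choose b : ℝ))) :=
            ENNReal.ofReal_le_ofReal hcount
        _ = ENNReal.ofReal δ * ENNReal.ofReal ((n.choose a : ℝ) * (n.choose b : ℝ)) := by
            rw [ENNReal.ofReal_mul hδ0]
        _ = ENNReal.ofReal δ * ((n.choose a : ℝ≥0∞) * (n.choose b : ℝ≥0∞)) := by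
            rw [ENNReal.ofReal_mul (by positivity), ENNReal.ofReal_natCast,
              ENNReal.ofReal_natCast]
    rw [hFailMeas, hCMeas]
    calc ((Bad a b).card : ℝ≥0∞) * v
        ≤ (ENNReal.ofReal δ * ((n.choose a : ℝ≥0∞) * (n.choose b : ℝ≥0∞))) * v :=
          mul_le_mul_left hcard_le v
      _ = ENNReal.ofReal δ * (((n.choose a : ℝ≥0∞) * (n.choose b : ℝ≥0∞)) * v) := by ring
  -- inclusion and final assembly
  have hsub : {ω | ¬ (lo ≤ (((A ω ∩ B ω).card : ℕ) : ℝ) ∧ (((A ω ∩ B ω).card : ℕ) : ℝ) ≤ hi)}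
      ⊆ ({ω | ¬ (loA ≤ (((A ω).card : ℕ) : ℝ) ∧ (((A ω).card : ℕ) : ℝ) ≤ hiA)}
        ∪ {ω | ¬ (loB ≤ (((B ω).card : ℕ) : ℝ) ∧ (((B ω).card : ℕ) : ℝ) ≤ hiB)})
        ∪ ⋃ q ∈ Gset, Fail q.1 q.2 := by
    intro ω hω
    by_cases hA : loA ≤ (((A ω).card : ℕ) : ℝ) ∧ (((A ω).card : ℕ) : ℝ) ≤ hiA
    · by_cases hB : loB ≤ (((B ω).card : ℕ) : ℝ) ∧ (((B ω).card : ℕ) : ℝ) ≤ hiB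
      · right
        set a := (A ω).card with ha
        set b := (B ω).card with hb
        have han : a ≤ n := (Finset.card_le_univ _).trans_eq Finset.card_univ
        have hbn : b ≤ n := (Finset.card_le_univ _).trans_eq Finset.card_univ
        have ha2 : 2 ≤ (a : ℝ) := le_trans hloA hA.1
        have hb2 : 2 ≤ (b : ℝ) := le_trans hloB hB.1
        have hn0 : (0:ℝ) < (n:ℝ) := by
          have : (2:ℝ) ≤ (n:ℝ) := le_trans ha2 (by exact_mod_cast han)
          linarith
        have hq : (a, b) ∈ Gset := by
          rw [hGset, Finset.mem_filter, Finset.mem_product, Finset.mem_range, Finset.mem_range]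
          exact ⟨⟨by omega, by omega⟩, hA.1, hA.2, hB.1, hB.2⟩
        refine Set.mem_biUnion hq ?_
        rw [hFail]
        show (A ω, B ω) ∈ Bad a b
        rw [hBad, Finset.mem_filter]
        refine ⟨Finset.mem_product.2 ⟨mem_powersetCard_univ.2 rfl, mem_powersetCard_univ.2 rfl⟩, ?_⟩
        by_contra hcon
        push_neg at hcon
        rw [abs_lt] at hcon
        apply hω
        have hab_lo := hlo (a : ℝ) (b : ℝ) hA.1 hB.1
        have hab_hi := hhi (a : ℝ) (b : ℝ) (Nat.cast_nonneg _) (Nat.cast_nonneg _) hA.2 hB.2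
        set X : ℝ := (((A ω ∩ B ω).card : ℕ) : ℝ) with hX
        constructor
        · nlinarith [hcon.1, hab_lo, hn0]
        · nlinarith [hcon.2, hab_hi, hn0]
      · left; right; exact hB
    · left; left; exact hA
  calc μ {ω | ¬ (lo ≤ (((A ω ∩ B ω).card : ℕ) : ℝ) ∧ (((A ω ∩ B ω).card : ℕ) : ℝ) ≤ hi)}
      ≤ μ (({ω | ¬ (loA ≤ (((A ω).card : ℕ) : ℝ) ∧ (((A ω).card : ℕ) : ℝ) ≤ hiA)}
        ∪ {ω | ¬ (loB ≤ (((B ω).card : ℕ) : ℝ) ∧ (((B ω).card : ℕ) : ℝ) ≤ hiB)})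
        ∪ ⋃ q ∈ Gset, Fail q.1 q.2) := measure_mono hsub
    _ ≤ (μ {ω | ¬ (loA ≤ (((A ω).card : ℕ) : ℝ) ∧ (((A ω).card : ℕ) : ℝ) ≤ hiA)}
        + μ {ω | ¬ (loB ≤ (((B ω).card : ℕ) : ℝ) ∧ (((B ω).card : ℕ) : ℝ) ≤ hiB)})
        + μ (⋃ q ∈ Gset, Fail q.1 q.2) :=
        le_trans (measure_union_le _ _) (add_le_add_left (measure_union_le _ _) _)
    _ ≤ _ := by
        refine add_le_add_right ?_ _
        calc μ (⋃ q ∈ Gset, Fail q.1 q.2) ≤ ∑ q ∈ Gset, μ (Fail q.1 q.2) :=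
              measure_biUnion_finset_le _ _
          _ ≤ ∑ q ∈ Gset, ENNReal.ofReal δ * μ (C q.1 q.2) := Finset.sum_le_sum pair_est
          _ = ENNReal.ofReal δ * ∑ q ∈ Gset, μ (C q.1 q.2) := by rw [Finset.mul_sum]
          _ ≤ ENNReal.ofReal δ * 1 := by
              apply mul_le_mul_right
              have hdisjC : (↑Gset : Set (ℕ × ℕ)).PairwiseDisjoint (fun q => C q.1 q.2) := by
                intro p _ q _ hpq
                apply Set.disjoint_left.2
                rintro ω ⟨h1, h2⟩ ⟨h3, h4⟩
                exact hpq (Prod.ext (h1 ▸ h3 ▸ rfl) (h2 ▸ h4 ▸ rfl))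
              have hmeasC : ∀ q ∈ Gset, MeasurableSet (C q.1 q.2) := fun q _ =>
                measJoint (fun s t => s.card = q.1 ∧ t.card = q.2)
              rw [← measure_biUnion_finset hdisjC hmeasC]
              exact prob_le_one
          _ = ENNReal.ofReal δ := mul_one _

end Aux

set_option maxHeartbeats 1000000 in
theorem stmt_15 {E : ℕ → Type*} [∀ n, Fintype (E n)] [∀ n, DecidableEq (E n)]
    {Ω : ℕ → Type*} [∀ n, MeasurableSpace (Ω n)]
    (μ : ∀ n, Measure (Ω n)) [∀ n, IsProbabilityMeasure (μ n)]
    (hcard : ∀ n, Fintype.card (E n) = n)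
    (α β : ℝ) (hα0 : 0 ≤ α) (hα1 : α ≤ 1) (hβ0 : 0 ≤ β) (hβ1 : β ≤ 1)
    (hαβ : 1 < α + β)
    (A B : ∀ n, Ω n → Finset (E n))
    (hAmeas : ∀ n (a : Finset (E n)), MeasurableSet {ω | A n ω = a})
    (hBmeas : ∀ n (b : Finset (E n)), MeasurableSet {ω | B n ω = b})
    (hApi : ∀ n, PermInv (μ n) (A n)) (hBpi : ∀ n, PermInv (μ n) (B n))
    (hAdens : Densable μ A α) (hBdens : Densable μ B β)
    (hAB : ∀ n, IndepRS (μ n) (A n) (B n)) :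
    Densable μ (fun n ω => A n ω ∩ B n ω) (α + β - 1) := by
  intro ε hε
  have hαβ1 : 0 < α + β - 1 := by linarith
  set ε' : ℝ := min ε (α + β - 1) / 4 with hε'def
  have hminε : min ε (α + β - 1) ≤ ε := min_le_left _ _
  have hminαβ : min ε (α + β - 1) ≤ α + β - 1 := min_le_right _ _
  have hmin0 : 0 < min ε (α + β - 1) := lt_min hε hαβ1
  have hε'0 : 0 < ε' := by rw [hε'def]; linarith
  have hε'ε : 4 * ε' ≤ ε := by rw [hε'def]; linarith
  have hε'αβ : 4 * ε' ≤ α + β - 1 := by rw [hε'def]; linarith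
  have hαε' : 0 < α - ε' := by linarith
  have hβε' : 0 < β - ε' := by linarith
  have hc3 : 0 < ε - 2 * ε' := by linarith
  have hcneg : 1 - (α + β) + 2 * ε' < 0 := by linarith
  have hA := hAdens ε' hε'0
  have hB := hBdens ε' hε'0
  simp only [hcard] at hA hB ⊢
  -- δ sequence tendsto 0
  have hδlim : Tendsto (fun n : ℕ => (4:ℝ) * (n:ℝ) ^ (1 - (α + β) + 2 * ε')) atTop (𝓝 0) := by
    have h1 : Tendsto (fun x : ℝ => x ^ (1 - (α + β) + 2 * ε')) atTop (𝓝 0) := by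
      have := tendsto_rpow_neg_atTop (y := -(1 - (α + β) + 2 * ε')) (by linarith)
      simpa using this
    have h2 := (h1.comp tendsto_natCast_atTop_atTop).const_mul (4:ℝ)
    simpa using h2
  -- eventual numeric conditions
  have hev : ∀ᶠ n : ℕ in atTop, (2:ℝ) ≤ (n:ℝ) ^ (α - ε') ∧ (2:ℝ) ≤ (n:ℝ) ^ (β - ε')
      ∧ (2:ℝ) ≤ (n:ℝ) ^ (ε - 2*ε') ∧ 1 ≤ n := by
    have hg : ∀ c : ℝ, 0 < c → ∀ᶠ n : ℕ in atTop, (2:ℝ) ≤ (n:ℝ) ^ c := by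
      intro c hc
      have := (tendsto_rpow_atTop hc).comp (tendsto_natCast_atTop_atTop (R := ℝ))
      exact this.eventually_ge_atTop 2
    filter_upwards [hg _ hαε', hg _ hβε', hg _ hc3, eventually_ge_atTop 1] with n h1 h2 h3 h4
    exact ⟨h1, h2, h3, h4⟩
  -- the eventual measure bound
  have hevb : ∀ᶠ n : ℕ in atTop,
      μ n ({ω | (n:ℝ) ^ (α + β - 1 - ε) ≤ ((A n ω ∩ B n ω).card : ℝ)
          ∧ ((A n ω ∩ B n ω).card : ℝ) ≤ (n:ℝ) ^ (α + β - 1 + ε)})ᶜ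
        ≤ (1 - μ n {ω | (n:ℝ) ^ (α - ε') ≤ ((A n ω).card : ℝ)
              ∧ ((A n ω).card : ℝ) ≤ (n:ℝ) ^ (α + ε')})
          + (1 - μ n {ω | (n:ℝ) ^ (β - ε') ≤ ((B n ω).card : ℝ)
              ∧ ((B n ω).card : ℝ) ≤ (n:ℝ) ^ (β + ε')})
          + ENNReal.ofReal ((4:ℝ) * (n:ℝ) ^ (1 - (α + β) + 2 * ε')) := by
    filter_upwards [hev] with n hn
    obtain ⟨h2a, h2b, h2c, h1n⟩ := hn
    have hN0 : (0:ℝ) < (n:ℝ) := by exact_mod_cast h1n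
    have hpow : ∀ c d : ℝ, (n:ℝ) ^ c * (n:ℝ) ^ d = (n:ℝ) ^ (c + d) :=
      fun c d => (Real.rpow_add hN0 c d).symm
    have hNcard : (Fintype.card (E n) : ℝ) = (n : ℝ) := by rw [hcard]
    have hcore := coreRS (μ n) (A n) (B n) (hAmeas n) (hBmeas n) (hApi n) (hBpi n)
      (fun a b => hAB n a b)
      ((n:ℝ) ^ (α - ε')) ((n:ℝ) ^ (α + ε')) ((n:ℝ) ^ (β - ε')) ((n:ℝ) ^ (β + ε'))
      ((n:ℝ) ^ (α + β - 1 - ε)) ((n:ℝ) ^ (α + β - 1 + ε))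
      ((4:ℝ) * (n:ℝ) ^ (1 - (α + β) + 2 * ε'))
      (by positivity) h2a h2b
      (by -- hδ
        intro x y hx hy
        rw [hNcard]
        have h0a : (0:ℝ) ≤ (n:ℝ) ^ (α - ε') := le_of_lt (Real.rpow_pos_of_pos hN0 _)
        have hxy : (n:ℝ) ^ (α - ε') * (n:ℝ) ^ (β - ε') ≤ x * y :=
          mul_le_mul hx hy (le_of_lt (Real.rpow_pos_of_pos hN0 _)) (le_trans h0a hx)
        calc 4 * (n:ℝ) = 4 * (n:ℝ) ^ ((1 - (α + β) + 2 * ε') + ((α - ε') + (β - ε'))) := by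
              rw [show (1 - (α + β) + 2 * ε') + ((α - ε') + (β - ε')) = 1 by ring,
                Real.rpow_one]
          _ = 4 * (n:ℝ) ^ (1 - (α + β) + 2 * ε') * ((n:ℝ) ^ (α - ε') * (n:ℝ) ^ (β - ε')) := by
              rw [hpow, Real.rpow_add hN0]; ring
          _ ≤ 4 * (n:ℝ) ^ (1 - (α + β) + 2 * ε') * (x * y) := by
              apply mul_le_mul_of_nonneg_left hxy; positivity)
      (by -- hlo
        intro x y hx hy
        rw [hNcard]
        have h0a : (0:ℝ) ≤ (n:ℝ) ^ (α - ε') := le_of_lt (Real.rpow_pos_of_pos hN0 _)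
        have hxy : (n:ℝ) ^ (α - ε') * (n:ℝ) ^ (β - ε') ≤ x * y :=
          mul_le_mul hx hy (le_of_lt (Real.rpow_pos_of_pos hN0 _)) (le_trans h0a hx)
        calc 2 * (n:ℝ) ^ (α + β - 1 - ε) * (n:ℝ)
            = 2 * (n:ℝ) ^ ((α + β - 1 - ε) + 1) := by
              rw [Real.rpow_add_one (ne_of_gt hN0)]; ring
          _ ≤ (n:ℝ) ^ (ε - 2*ε') * (n:ℝ) ^ ((α + β - 1 - ε) + 1) := by
              apply mul_le_mul_of_nonneg_right h2c (le_of_lt (Real.rpow_pos_of_pos hN0 _))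
          _ = (n:ℝ) ^ (α - ε') * (n:ℝ) ^ (β - ε') := by
              rw [hpow, hpow]
              congr 1
              ring
          _ ≤ x * y := hxy)
      (by -- hhi
        intro x y hx0 hy0 hx hy
        rw [hNcard]
        have hxy : x * y ≤ (n:ℝ) ^ (α + ε') * (n:ℝ) ^ (β + ε') :=
          mul_le_mul hx hy hy0 (le_of_lt (Real.rpow_pos_of_pos hN0 _))
        calc 3 * (x * y) ≤ 3 * ((n:ℝ) ^ (α + ε') * (n:ℝ) ^ (β + ε')) := by linarith
          _ = 3 * (n:ℝ) ^ ((α + ε') + (β + ε')) := by rw [hpow]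
          _ ≤ 2 * ((n:ℝ) ^ (ε - 2*ε') * (n:ℝ) ^ ((α + ε') + (β + ε'))) := by
              nlinarith [Real.rpow_pos_of_pos hN0 ((α + ε') + (β + ε')), h2c]
          _ = 2 * (n:ℝ) ^ (α + β - 1 + ε) * (n:ℝ) := by
              rw [hpow]
              rw [show (ε - 2*ε') + ((α + ε') + (β + ε')) = (α + β - 1 + ε) + 1 by ring,
                Real.rpow_add_one (ne_of_gt hN0)]
              ring)
    -- translate complements
    rw [Set.compl_setOf]
    have emeasA : MeasurableSet {ω | (n:ℝ) ^ (α - ε') ≤ ((A n ω).card : ℝ)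
        ∧ ((A n ω).card : ℝ) ≤ (n:ℝ) ^ (α + ε')} :=
      measJointRS (A n) (B n) (hAmeas n) (hBmeas n)
        (fun s t => (n:ℝ) ^ (α - ε') ≤ (s.card : ℝ) ∧ (s.card : ℝ) ≤ (n:ℝ) ^ (α + ε'))
    have emeasB : MeasurableSet {ω | (n:ℝ) ^ (β - ε') ≤ ((B n ω).card : ℝ)
        ∧ ((B n ω).card : ℝ) ≤ (n:ℝ) ^ (β + ε')} :=
      measJointRS (A n) (B n) (hAmeas n) (hBmeas n)
        (fun s t => (n:ℝ) ^ (β - ε') ≤ (t.card : ℝ) ∧ (t.card : ℝ) ≤ (n:ℝ) ^ (β + ε'))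
    have hA' : μ n {ω | ¬ ((n:ℝ) ^ (α - ε') ≤ ((A n ω).card : ℝ)
        ∧ ((A n ω).card : ℝ) ≤ (n:ℝ) ^ (α + ε'))}
        = 1 - μ n {ω | (n:ℝ) ^ (α - ε') ≤ ((A n ω).card : ℝ)
        ∧ ((A n ω).card : ℝ) ≤ (n:ℝ) ^ (α + ε')} := by
      rw [← Set.compl_setOf, prob_compl_eq_one_sub emeasA]
    have hB' : μ n {ω | ¬ ((n:ℝ) ^ (β - ε') ≤ ((B n ω).card : ℝ)
        ∧ ((B n ω).card : ℝ) ≤ (n:ℝ) ^ (β + ε'))}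
        = 1 - μ n {ω | (n:ℝ) ^ (β - ε') ≤ ((B n ω).card : ℝ)
        ∧ ((B n ω).card : ℝ) ≤ (n:ℝ) ^ (β + ε')} := by
      rw [← Set.compl_setOf, prob_compl_eq_one_sub emeasB]
    rw [hA', hB'] at hcore
    exact hcore
  -- limit of the bound
  have hbound0 : Tendsto (fun n : ℕ =>
      (1 - μ n {ω | (n:ℝ) ^ (α - ε') ≤ ((A n ω).card : ℝ)
          ∧ ((A n ω).card : ℝ) ≤ (n:ℝ) ^ (α + ε')})
        + (1 - μ n {ω | (n:ℝ) ^ (β - ε') ≤ ((B n ω).card : ℝ)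
          ∧ ((B n ω).card : ℝ) ≤ (n:ℝ) ^ (β + ε')})
        + ENNReal.ofReal ((4:ℝ) * (n:ℝ) ^ (1 - (α + β) + 2 * ε'))) atTop (𝓝 0) := by
    have t1 : Tendsto (fun n : ℕ => 1 - μ n {ω | (n:ℝ) ^ (α - ε') ≤ ((A n ω).card : ℝ)
        ∧ ((A n ω).card : ℝ) ≤ (n:ℝ) ^ (α + ε')}) atTop (𝓝 0) := by
      have := ENNReal.Tendsto.sub (tendsto_const_nhds (x := (1:ℝ≥0∞))) hA
        (Or.inl ENNReal.one_ne_top)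
      simpa using this
    have t2 : Tendsto (fun n : ℕ => 1 - μ n {ω | (n:ℝ) ^ (β - ε') ≤ ((B n ω).card : ℝ)
        ∧ ((B n ω).card : ℝ) ≤ (n:ℝ) ^ (β + ε')}) atTop (𝓝 0) := by
      have := ENNReal.Tendsto.sub (tendsto_const_nhds (x := (1:ℝ≥0∞))) hB
        (Or.inl ENNReal.one_ne_top)
      simpa using this
    have t3 : Tendsto (fun n : ℕ =>
        ENNReal.ofReal ((4:ℝ) * (n:ℝ) ^ (1 - (α + β) + 2 * ε'))) atTop (𝓝 0) := by
      have := (ENNReal.continuous_ofReal.tendsto 0).comp hδlim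
      rw [ENNReal.ofReal_zero] at this
      exact this
    have := (t1.add t2).add t3
    simpa using this
  -- complements tendsto 0
  have hTc : Tendsto (fun n : ℕ =>
      μ n ({ω | (n:ℝ) ^ (α + β - 1 - ε) ≤ ((A n ω ∩ B n ω).card : ℝ)
          ∧ ((A n ω ∩ B n ω).card : ℝ) ≤ (n:ℝ) ^ (α + β - 1 + ε)})ᶜ) atTop (𝓝 0) := by
    apply tendsto_of_tendsto_of_tendsto_of_le_of_le' tendsto_const_nhds hbound0
    · exact Eventually.of_forall fun n => zero_le
    · exact hevb
  -- conclude
  have hmeasT : ∀ n : ℕ, MeasurableSet {ω | (n:ℝ) ^ (α + β - 1 - ε) ≤ ((A n ω ∩ B n ω).card : ℝ)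
      ∧ ((A n ω ∩ B n ω).card : ℝ) ≤ (n:ℝ) ^ (α + β - 1 + ε)} := fun n =>
    measJointRS (A n) (B n) (hAmeas n) (hBmeas n)
      (fun s t => (n:ℝ) ^ (α + β - 1 - ε) ≤ ((s ∩ t).card : ℝ)
        ∧ ((s ∩ t).card : ℝ) ≤ (n:ℝ) ^ (α + β - 1 + ε))
  have heq : ∀ n : ℕ, μ n {ω | (n:ℝ) ^ (α + β - 1 - ε) ≤ ((A n ω ∩ B n ω).card : ℝ)
      ∧ ((A n ω ∩ B n ω).card : ℝ) ≤ (n:ℝ) ^ (α + β - 1 + ε)}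
      = 1 - μ n ({ω | (n:ℝ) ^ (α + β - 1 - ε) ≤ ((A n ω ∩ B n ω).card : ℝ)
      ∧ ((A n ω ∩ B n ω).card : ℝ) ≤ (n:ℝ) ^ (α + β - 1 + ε)})ᶜ := by
    intro n
    rw [prob_compl_eq_one_sub (hmeasT n), ENNReal.sub_sub_cancel ENNReal.one_ne_top prob_le_one]
  have := ENNReal.Tendsto.sub (tendsto_const_nhds (x := (1:ℝ≥0∞))) hTc
    (Or.inl ENNReal.one_ne_top)
  simp only [tsub_zero] at this
  exact Tendsto.congr (fun n => (heq n).symm) this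
end

section
/- Let A be a uniform random subset of cardinality ⌊n^d⌋ of a finite set E with |E| = n, where 0 < ε < d and 1 ≤ r ≤ 2k are integers and n ≥ (1+2k)^{1/ε}. Then for any r distinct elements x_1,…,x_r of E: n^{r(d-1-ε)} ≤ Pr({x_1,…,x_r} ⊆ A) ≤ n^{r(d-1+ε)}. Moreover, 0 ≤ Pr({x_1,…,x_k} ⊆ A)² − Pr({x_1,…,x_{2k}} ⊆ A) ≤ n^{2k(d-1+ε)-d}. -/
open MeasureTheory ProbabilityTheory Filter
open scoped ENNReal Topology

lemma aux_count {E : Type*} [Fintype E] [DecidableEq E] (s : Finset E) (K : ℕ)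
    (hsK : s.card ≤ K) :
    (Finset.univ.filter (fun a : Finset E => s ⊆ a ∧ a.card = K)).card
      = (Fintype.card E - s.card).choose (K - s.card) := by
  rw [← Finset.card_compl s, ← Finset.card_powersetCard]
  apply Finset.card_bij' (fun a _ => a \ s) (fun b _ => b ∪ s)
  · intro a ha
    simp only [Finset.mem_filter, Finset.mem_univ, true_and] at ha
    rw [Finset.mem_powersetCard]
    constructor
    · intro x hx
      simp only [Finset.mem_sdiff] at hx
      simp [hx.2]
    · rw [Finset.card_sdiff_of_subset ha.1, ha.2]
  · intro b hb
    rw [Finset.mem_powersetCard] at hb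
    have hdisj : Disjoint b s := by
      refine Finset.disjoint_left.2 fun x hx hxs => ?_
      have := hb.1 hx
      simp at this
      exact this hxs
    simp only [Finset.mem_filter, Finset.mem_univ, true_and]
    refine ⟨Finset.subset_union_right, ?_⟩
    rw [Finset.card_union_of_disjoint hdisj, hb.2]
    omega
  · intro a ha
    simp only [Finset.mem_filter, Finset.mem_univ, true_and] at ha
    exact Finset.sdiff_union_of_subset ha.1
  · intro b hb
    rw [Finset.mem_powersetCard] at hb
    have hdisj : Disjoint b s := by
      refine Finset.disjoint_left.2 fun x hx hxs => ?_
      have := hb.1 hx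
      simp at this
      exact this hxs
    exact Finset.union_sdiff_cancel_right hdisj

lemma aux_meas {E Ω : Type*} [Fintype E] [DecidableEq E] [MeasurableSpace Ω]
    (μ : Measure Ω) (A : Ω → Finset E) (K : ℕ)
    (hAmeas : ∀ a : Finset E, MeasurableSet {ω | A ω = a})
    (hA : IsUniformRS μ A K) (s : Finset E) :
    μ {ω | s ⊆ A ω}
      = ((Finset.univ.filter (fun a : Finset E => s ⊆ a ∧ a.card = K)).card : ℝ≥0∞)
        * ((Fintype.card E).choose K : ℝ≥0∞)⁻¹ := by
  have hset : {ω | s ⊆ A ω}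
      = ⋃ a ∈ Finset.univ.filter (fun a : Finset E => s ⊆ a), {ω | A ω = a} := by
    ext ω
    simp only [Set.mem_setOf_eq, Set.mem_iUnion, Finset.mem_filter, Finset.mem_univ, true_and]
    exact ⟨fun h => ⟨A ω, h, rfl⟩, fun ⟨a, ha, haa⟩ => haa ▸ ha⟩
  have hdisj : (↑(Finset.univ.filter (fun a : Finset E => s ⊆ a)) :
      Set (Finset E)).PairwiseDisjoint (fun a => {ω | A ω = a}) := by
    intro a _ b _ hab
    refine Set.disjoint_left.2 fun ω hωa hωb => ?_
    exact hab (hωa.symm.trans hωb)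
  rw [hset, measure_biUnion_finset hdisj (fun a _ => hAmeas a)]
  rw [Finset.sum_congr rfl fun a _ => hA a]
  rw [← Finset.sum_filter, Finset.filter_filter, Finset.sum_const, nsmul_eq_mul]

set_option maxHeartbeats 2000000 in
theorem stmt_19 {E Ω : Type*} [Fintype E] [DecidableEq E]
    [MeasurableSpace Ω] (μ : Measure Ω) [IsProbabilityMeasure μ]
    (n : ℕ) (hn : Fintype.card E = n)
    (d ε : ℝ) (hε : 0 < ε) (hεd : ε < d)
    (k : ℕ) (hk : 1 ≤ k)
    (hnk : ((1 + 2 * k : ℕ) : ℝ) ^ (1 / ε) ≤ (n : ℝ))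
    (A : Ω → Finset E)
    (hAmeas : ∀ a : Finset E, MeasurableSet {ω | A ω = a})
    (hA : IsUniformRS μ A ⌊(n : ℝ) ^ d⌋₊) :
    (∀ r : ℕ, 1 ≤ r → r ≤ 2 * k → ∀ s : Finset E, s.card = r →
      (n : ℝ) ^ ((r : ℝ) * (d - 1 - ε)) ≤ (μ {ω | s ⊆ A ω}).toReal
        ∧ (μ {ω | s ⊆ A ω}).toReal ≤ (n : ℝ) ^ ((r : ℝ) * (d - 1 + ε)))
    ∧ (∀ s t : Finset E, s.card = k → t.card = 2 * k →
        0 ≤ (μ {ω | s ⊆ A ω}).toReal ^ 2 - (μ {ω | t ⊆ A ω}).toReal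
        ∧ (μ {ω | s ⊆ A ω}).toReal ^ 2 - (μ {ω | t ⊆ A ω}).toReal
            ≤ (n : ℝ) ^ (2 * (k : ℝ) * (d - 1 + ε) - d)) := by
  set K := ⌊(n : ℝ) ^ d⌋₊ with hKdef
  have hd : 0 < d := hε.trans hεd
  have hn1 : (1 : ℝ) < n := by
    refine lt_of_lt_of_le ?_ hnk
    rw [Real.one_lt_rpow_iff_of_pos (by positivity)]
    left
    constructor
    · have h1k : (1 : ℝ) ≤ (k : ℝ) := by exact_mod_cast hk
      push_cast
      linarith
    · positivity
  have hn0 : (0 : ℝ) < n := by linarith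
  have hne : (1 : ℝ) + 2 * k ≤ (n : ℝ) ^ ε := by
    have h1 : (((1 + 2 * k : ℕ) : ℝ) ^ (1 / ε)) ^ ε ≤ (n : ℝ) ^ ε :=
      Real.rpow_le_rpow (by positivity) hnk hε.le
    rw [← Real.rpow_mul (by positivity), one_div_mul_cancel hε.ne', Real.rpow_one] at h1
    push_cast at h1
    linarith
  have hKled : (K : ℝ) ≤ (n : ℝ) ^ d := Nat.floor_le (by positivity)
  have hKgt : (n : ℝ) ^ d < (K : ℝ) + 1 := by
    exact_mod_cast Nat.lt_floor_add_one ((n : ℝ) ^ d)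
  have hrd1 : (1 : ℝ) ≤ (n : ℝ) ^ (d - ε) := Real.one_le_rpow hn1.le (by linarith)
  have hgap : (n : ℝ) ^ (d - ε) + 2 * k ≤ (n : ℝ) ^ d := by
    have hmul : (n : ℝ) ^ (d - ε) * (n : ℝ) ^ ε = (n : ℝ) ^ d := by
      rw [← Real.rpow_add hn0]; ring_nf
    nlinarith [hrd1, hne]
  have hKn : K ≤ n := by
    by_contra hlt
    push_neg at hlt
    have h1 := aux_meas μ A K hAmeas hA (∅ : Finset E)
    have hempty : (Finset.univ.filter (fun a : Finset E => ∅ ⊆ a ∧ a.card = K)) = ∅ := by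
      apply Finset.filter_false_of_mem
      intro a _
      have : a.card ≤ n := hn ▸ Finset.card_le_univ a
      simp only [not_and]
      intro _
      omega
    rw [hempty] at h1
    have huniv : {ω | (∅ : Finset E) ⊆ A ω} = Set.univ := by
      ext ω; simp
    rw [huniv, measure_univ] at h1
    simp at h1
  have h2kK : 2 * k < K := by
    have : (2 * k : ℝ) < (K : ℝ) := by push_cast; nlinarith
    exact_mod_cast this
  -- the probability formula
  have hProb : ∀ r : ℕ, r ≤ K → ∀ s : Finset E, s.card = r →
      (μ {ω | s ⊆ A ω}).toReal
        = ∏ i ∈ Finset.range r, (((K : ℝ) - i) / ((n : ℝ) - i)) := by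
    intro r hrK s hs
    rw [aux_meas μ A K hAmeas hA s, aux_count s K (by omega), hn, hs]
    have hCpos : 0 < n.choose K := Nat.choose_pos hKn
    have hDnpos : 0 < n.descFactorial r := by
      rw [Nat.pos_iff_ne_zero, Ne, Nat.descFactorial_eq_zero_iff_lt]
      omega
    have hid : (n.choose K) * (K.descFactorial r) = ((n - r).choose (K - r)) * (n.descFactorial r) := by
      rw [Nat.descFactorial_eq_factorial_mul_choose, Nat.descFactorial_eq_factorial_mul_choose,
        ← Nat.mul_assoc, ← Nat.mul_assoc, Nat.mul_comm (n.choose K), Nat.mul_comm ((n-r).choose (K-r)),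
        Nat.mul_assoc, Nat.mul_assoc, Nat.choose_mul hrK]
      ring
    have hprod : ∏ i ∈ Finset.range r, (((K : ℝ) - i) / ((n : ℝ) - i))
        = (K.descFactorial r : ℝ) / (n.descFactorial r : ℝ) := by
      rw [Nat.descFactorial_eq_prod_range, Nat.descFactorial_eq_prod_range,
        Nat.cast_prod, Nat.cast_prod, ← Finset.prod_div_distrib]
      refine Finset.prod_congr rfl fun i hi => ?_
      rw [Finset.mem_range] at hi
      rw [Nat.cast_sub (by omega), Nat.cast_sub (by omega)]
    rw [ENNReal.toReal_mul, ENNReal.toReal_inv, hprod]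
    simp only [ENNReal.toReal_natCast]
    have hid2 : ((n - r).choose (K - r)) * (n.descFactorial r)
        = (K.descFactorial r) * (n.choose K) := by rw [← hid]; ring
    have hCne : ((n.choose K : ℝ)) ≠ 0 := by exact_mod_cast hCpos.ne'
    have hDne : ((n.descFactorial r : ℝ)) ≠ 0 := by exact_mod_cast hDnpos.ne'
    field_simp
    exact_mod_cast hid2.trans (Nat.mul_comm _ _)
  -- per-factor bounds
  have hnd1 : (n : ℝ) ^ (d - 1) = (n : ℝ) ^ d / n := by
    rw [Real.rpow_sub hn0, Real.rpow_one]
  have hKi : ∀ i : ℕ, i < 2 * k → (n : ℝ) ^ (d - ε) ≤ (K : ℝ) - i := by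
    intro i hi
    have h1 : (i : ℝ) + 1 ≤ 2 * (k : ℝ) := by exact_mod_cast hi
    linarith [hgap, hKgt]
  have hden : ∀ i : ℕ, i < 2 * k → (0 : ℝ) < (n : ℝ) - i := by
    intro i hi
    have : (i : ℝ) < (n : ℝ) := by
      have : i < n := by omega
      exact_mod_cast this
    linarith
  have hclb : ∀ i : ℕ, i < 2 * k → (n : ℝ) ^ (d - 1 - ε) ≤ ((K : ℝ) - i) / ((n : ℝ) - i) := by
    intro i hi
    have h1 : (n : ℝ) ^ (d - 1 - ε) = (n : ℝ) ^ (d - ε) / n := by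
      rw [show d - 1 - ε = (d - ε) - 1 by ring, Real.rpow_sub hn0, Real.rpow_one]
    rw [h1]
    apply div_le_div₀ (by nlinarith [hKi i hi, hrd1]) (hKi i hi) (hden i hi)
    have : (0 : ℝ) ≤ (i : ℝ) := by positivity
    linarith
  have hcmid : ∀ i : ℕ, i < 2 * k → ((K : ℝ) - i) / ((n : ℝ) - i) ≤ (n : ℝ) ^ (d - 1) := by
    intro i hi
    rw [hnd1, div_le_div_iff₀ (hden i hi) hn0]
    have hKn' : (K : ℝ) ≤ (n : ℝ) := by exact_mod_cast hKn
    have hi0 : (0 : ℝ) ≤ (i : ℝ) := by positivity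
    have h1 : ((K : ℝ) - i) * n ≤ (K : ℝ) * ((n : ℝ) - i) := by nlinarith
    have h2 : (K : ℝ) * ((n : ℝ) - i) ≤ (n : ℝ) ^ d * ((n : ℝ) - i) :=
      mul_le_mul_of_nonneg_right hKled (hden i hi).le
    linarith
  have hc0 : ∀ i : ℕ, i < 2 * k → 0 ≤ ((K : ℝ) - i) / ((n : ℝ) - i) := by
    intro i hi
    exact le_trans (by positivity) (hclb i hi)
  have hKnR : (K : ℝ) ≤ (n : ℝ) := by exact_mod_cast hKn
  have hd1e : (n : ℝ) ^ (d - 1) ≤ (n : ℝ) ^ (d - 1 + ε) :=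
    Real.rpow_le_rpow_of_exponent_le hn1.le (by linarith)
  constructor
  · -- Part 1
    intro r hr1 hr2 s hs
    have hrK : r ≤ K := by omega
    rw [hProb r hrK s hs]
    constructor
    · calc (n : ℝ) ^ ((r : ℝ) * (d - 1 - ε))
          = ((n : ℝ) ^ (d - 1 - ε)) ^ r := by
            rw [← Real.rpow_natCast ((n : ℝ) ^ (d - 1 - ε)) r, ← Real.rpow_mul hn0.le,
              mul_comm]
        _ = ∏ _i ∈ Finset.range r, (n : ℝ) ^ (d - 1 - ε) := by
            rw [Finset.prod_const, Finset.card_range]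
        _ ≤ ∏ i ∈ Finset.range r, (((K : ℝ) - i) / ((n : ℝ) - i)) := by
            refine Finset.prod_le_prod (fun i _ => by positivity) fun i hi => ?_
            exact hclb i (lt_of_lt_of_le (Finset.mem_range.1 hi) hr2)
    · calc ∏ i ∈ Finset.range r, (((K : ℝ) - i) / ((n : ℝ) - i))
          ≤ ∏ _i ∈ Finset.range r, (n : ℝ) ^ (d - 1 + ε) := by
            refine Finset.prod_le_prod
              (fun i hi => hc0 i (lt_of_lt_of_le (Finset.mem_range.1 hi) hr2)) fun i hi => ?_
            exact le_trans (hcmid i (lt_of_lt_of_le (Finset.mem_range.1 hi) hr2)) hd1e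
        _ = (n : ℝ) ^ ((r : ℝ) * (d - 1 + ε)) := by
            rw [Finset.prod_const, Finset.card_range, ← Real.rpow_natCast
              ((n : ℝ) ^ (d - 1 + ε)) r, ← Real.rpow_mul hn0.le, mul_comm]
  · -- Part 2
    intro s t hs ht
    rw [hProb k (by omega) s hs, hProb (2 * k) (by omega) t ht]
    set c : ℕ → ℝ := fun i => ((K : ℝ) - i) / ((n : ℝ) - i) with hc
    set P := ∏ i ∈ Finset.range k, c i with hP
    set Q := ∏ i ∈ Finset.range k, c (k + i) with hQ
    have hsplit : ∏ i ∈ Finset.range (2 * k), c i = P * Q := by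
      rw [two_mul, Finset.prod_range_add]
    rw [hsplit]
    have hcP0 : ∀ i ∈ Finset.range k, 0 ≤ c i := fun i hi =>
      hc0 i (by have := Finset.mem_range.1 hi; omega)
    have hcQ0 : ∀ i ∈ Finset.range k, 0 ≤ c (k + i) := fun i hi =>
      hc0 (k + i) (by have := Finset.mem_range.1 hi; omega)
    have hPpos : 0 ≤ P := Finset.prod_nonneg hcP0
    have hQP : Q ≤ P := by
      refine Finset.prod_le_prod hcQ0 fun i hi => ?_
      have hik : i < k := Finset.mem_range.1 hi
      have hd1 : (0 : ℝ) < (n : ℝ) - (k + i : ℕ) := hden (k + i) (by omega)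
      have hd2 : (0 : ℝ) < (n : ℝ) - (i : ℕ) := hden i (by omega)
      show ((K : ℝ) - (k + i : ℕ)) / ((n : ℝ) - (k + i : ℕ))
          ≤ ((K : ℝ) - i) / ((n : ℝ) - i)
      rw [div_le_div_iff₀ hd1 hd2]
      have hkey : ((K : ℝ) - i) * ((n : ℝ) - (k + i : ℕ))
          - ((K : ℝ) - (k + i : ℕ)) * ((n : ℝ) - i) = (k : ℝ) * ((n : ℝ) - K) := by
        push_cast; ring
      nlinarith [mul_nonneg (by positivity : (0:ℝ) ≤ (k:ℝ)) (sub_nonneg.2 hKnR)]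
    have hK2k1 : (n : ℝ) ^ (d - ε) ≤ (K : ℝ) - (2 * k : ℕ) + 1 := by
      have := hKi (2 * k - 1) (by omega)
      have hcast : ((2 * k - 1 : ℕ) : ℝ) = 2 * (k : ℝ) - 1 := by
        push_cast [Nat.cast_sub (by omega : 1 ≤ 2 * k)]; ring
      rw [hcast] at this
      push_cast
      linarith
    set x : ℝ := (k : ℝ) / ((K : ℝ) - k + 1) with hx
    have hKk1pos : (0 : ℝ) < (K : ℝ) - k + 1 := by
      have h2k : (2 * k : ℝ) < (K : ℝ) := by exact_mod_cast h2kK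
      have : (0 : ℝ) < (k : ℝ) := by exact_mod_cast hk
      linarith
    have hx0 : 0 ≤ x := by positivity
    have hx1 : x ≤ 1 := by
      rw [div_le_one hKk1pos]
      have h2k : (2 * k : ℝ) < (K : ℝ) := by exact_mod_cast h2kK
      have : (0 : ℝ) < (k : ℝ) := by exact_mod_cast hk
      linarith
    have hQlb : P * (1 - (k : ℝ) * x) ≤ Q := by
      have hfac : ∀ i ∈ Finset.range k, c i * (1 - x) ≤ c (k + i) := by
        intro i hi
        have hik : i < k := Finset.mem_range.1 hi
        have hd1 : (0 : ℝ) < (n : ℝ) - (k + i : ℕ) := hden (k + i) (by omega)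
        have hd2 : (0 : ℝ) < (n : ℝ) - (i : ℕ) := hden i (by omega)
        have hKi' : (0 : ℝ) < (K : ℝ) - i := by
          have := hKi i (by omega); nlinarith [hrd1]
        have hKki : (0 : ℝ) ≤ (K : ℝ) - k - i := by
          have h2k : (2 * k : ℝ) < (K : ℝ) := by exact_mod_cast h2kK
          have hik' : (i : ℝ) ≤ (k : ℝ) - 1 := by exact_mod_cast Nat.le_sub_one_of_lt hik
          have : (1 : ℝ) ≤ (k : ℝ) := by exact_mod_cast hk
          linarith
        have step1 : c i * (1 - x) ≤ c i * (1 - (k : ℝ) / ((K : ℝ) - i)) := by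
          apply mul_le_mul_of_nonneg_left _ (hc0 i (by omega))
          have hle : (k : ℝ) / ((K : ℝ) - i) ≤ x := by
            rw [hx]
            apply div_le_div_of_nonneg_left (by positivity) hKk1pos
            have hik' : (i : ℝ) ≤ (k : ℝ) - 1 := by exact_mod_cast Nat.le_sub_one_of_lt hik
            linarith
          linarith
        have step2 : c i * (1 - (k : ℝ) / ((K : ℝ) - i)) = ((K : ℝ) - k - i) / ((n : ℝ) - i) := by
          rw [hc]
          field_simp
          ring
        have step3 : ((K : ℝ) - k - i) / ((n : ℝ) - i) ≤ ((K : ℝ) - k - i) / ((n : ℝ) - (k + i : ℕ)) :=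
          div_le_div_of_nonneg_left hKki hd1 (by push_cast; linarith [ (by exact_mod_cast hk : (1:ℝ) ≤ (k:ℝ))])
        have : c (k + i) = ((K : ℝ) - k - i) / ((n : ℝ) - (k + i : ℕ)) := by
          rw [hc]; push_cast; ring_nf
        rw [this]
        calc c i * (1 - x) ≤ c i * (1 - (k : ℝ) / ((K : ℝ) - i)) := step1
          _ = ((K : ℝ) - k - i) / ((n : ℝ) - i) := step2
          _ ≤ _ := step3
      have h1 : ∏ i ∈ Finset.range k, (c i * (1 - x)) ≤ Q :=
        Finset.prod_le_prod (fun i hi => mul_nonneg (hcP0 i hi) (by linarith)) hfac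
      have h2 : ∏ i ∈ Finset.range k, (c i * (1 - x)) = P * (1 - x) ^ k := by
        rw [Finset.prod_mul_distrib, Finset.prod_const, Finset.card_range]
      have h3 : 1 - (k : ℝ) * x ≤ (1 - x) ^ k := by
        have := one_add_mul_le_pow (show (-2 : ℝ) ≤ -x by linarith) k
        rw [show (1 : ℝ) + -x = 1 - x by ring] at this
        linarith [this]
      calc P * (1 - (k : ℝ) * x) ≤ P * (1 - x) ^ k :=
            mul_le_mul_of_nonneg_left h3 hPpos
        _ = ∏ i ∈ Finset.range k, (c i * (1 - x)) := h2.symm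
        _ ≤ Q := h1
    constructor
    · nlinarith [mul_le_mul_of_nonneg_left hQP hPpos]
    · have hmain : P ^ 2 - P * Q ≤ P ^ 2 * ((k : ℝ) * x) := by
        nlinarith [mul_le_mul_of_nonneg_left hQlb hPpos, sq_nonneg P]
      have hPk : P ≤ (n : ℝ) ^ ((d - 1) * k) := by
        calc P ≤ ∏ _i ∈ Finset.range k, (n : ℝ) ^ (d - 1) :=
              Finset.prod_le_prod hcP0 fun i hi => hcmid i (by have := Finset.mem_range.1 hi; omega)
          _ = (n : ℝ) ^ ((d - 1) * k) := by
              rw [Finset.prod_const, Finset.card_range, ← Real.rpow_natCast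
                ((n : ℝ) ^ (d - 1)) k, ← Real.rpow_mul hn0.le]
      have hP2 : P ^ 2 ≤ (n : ℝ) ^ ((d - 1) * k * 2) := by
        have := mul_le_mul hPk hPk hPpos (by positivity)
        calc P ^ 2 = P * P := sq P
          _ ≤ (n : ℝ) ^ ((d - 1) * k) * (n : ℝ) ^ ((d - 1) * k) := this
          _ = (n : ℝ) ^ ((d - 1) * k * 2) := by rw [← Real.rpow_add hn0]; ring_nf
      have hkx : (k : ℝ) * x ≤ (k : ℝ) ^ 2 * (n : ℝ) ^ (ε - d) := by
        have heq : (k : ℝ) * x = (k : ℝ) ^ 2 / ((K : ℝ) - k + 1) := by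
          rw [hx]; ring
        have hKk1' : (n : ℝ) ^ (d - ε) ≤ (K : ℝ) - k + 1 := by
          push_cast at hK2k1 ⊢
          have : (k : ℝ) ≤ (2 : ℝ) * k := by nlinarith [(by exact_mod_cast hk : (1:ℝ) ≤ (k:ℝ))]
          linarith
        have h1 : (k : ℝ) ^ 2 / ((K : ℝ) - k + 1) ≤ (k : ℝ) ^ 2 / (n : ℝ) ^ (d - ε) :=
          div_le_div_of_nonneg_left (by positivity) (by positivity) hKk1'
        have h2 : (k : ℝ) ^ 2 / (n : ℝ) ^ (d - ε) = (k : ℝ) ^ 2 * (n : ℝ) ^ (ε - d) := by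
          rw [div_eq_mul_inv, ← Real.rpow_neg hn0.le]
          ring_nf
        rw [heq]
        rw [h2] at h1
        exact h1
      have hk2n : (k : ℝ) ^ 2 ≤ (n : ℝ) ^ ((2 * (k : ℝ) - 1) * ε) := by
        have hnat : k ^ 2 ≤ (1 + 2 * k) ^ (2 * k - 1) := by
          rcases Nat.lt_or_ge k 2 with h | h
          · interval_cases k
            · decide
          · calc k ^ 2 ≤ (1 + 2 * k) ^ 2 := Nat.pow_le_pow_left (by omega) 2
              _ ≤ (1 + 2 * k) ^ (2 * k - 1) := Nat.pow_le_pow_right (by omega) (by omega)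
        have hcast : ((k : ℝ)) ^ 2 ≤ ((1 + 2 * (k : ℝ))) ^ (2 * k - 1 : ℕ) := by
          exact_mod_cast hnat
        have hstep : ((1 + 2 * (k : ℝ))) ^ (2 * k - 1 : ℕ) ≤ ((n : ℝ) ^ ε) ^ (2 * k - 1 : ℕ) :=
          pow_le_pow_left₀ (by positivity) hne (2 * k - 1)
        have heq : ((n : ℝ) ^ ε) ^ (2 * k - 1 : ℕ) = (n : ℝ) ^ ((2 * (k : ℝ) - 1) * ε) := by
          rw [← Real.rpow_natCast ((n : ℝ) ^ ε) (2 * k - 1), ← Real.rpow_mul hn0.le]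
          congr 1
          push_cast [Nat.cast_sub (by omega : 1 ≤ 2 * k)]
          ring
        calc (k : ℝ) ^ 2 ≤ _ := hcast
          _ ≤ _ := hstep
          _ = _ := heq
      have hfin : (n : ℝ) ^ ((d - 1) * k * 2) * ((n : ℝ) ^ ((2 * (k : ℝ) - 1) * ε) * (n : ℝ) ^ (ε - d))
          = (n : ℝ) ^ (2 * (k : ℝ) * (d - 1 + ε) - d) := by
        rw [← Real.rpow_add hn0, ← Real.rpow_add hn0]
        congr 1
        ring
      calc P ^ 2 - P * Q ≤ P ^ 2 * ((k : ℝ) * x) := hmain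
        _ ≤ (n : ℝ) ^ ((d - 1) * k * 2) * ((k : ℝ) ^ 2 * (n : ℝ) ^ (ε - d)) := by
            apply mul_le_mul hP2 hkx (by positivity) (by positivity)
        _ ≤ (n : ℝ) ^ ((d - 1) * k * 2) * ((n : ℝ) ^ ((2 * (k : ℝ) - 1) * ε) * (n : ℝ) ^ (ε - d)) := by
            apply mul_le_mul_of_nonneg_left _ (by positivity)
            exact mul_le_mul_of_nonneg_right hk2n (by positivity)
        _ = (n : ℝ) ^ (2 * (k : ℝ) * (d - 1 + ε) - d) := hfin
end
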